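/- arXiv:2309.10448 — 12 statements merged into one kernel-verified Lean document; each statement's English description precedes it below -/
import Mathlib

section
/- Fix σ > 0 and d ≥ 0, and define F : [0, ∞) → ℝ by F(x) = x·(σ⁴ + x·d²)/(σ² + x)². If 2d² ≥ σ², then F is strictly increasing on [0, ∞). If 2d² < σ², then F is strictly increasing on [0, σ⁴/(σ² − 2d²)] and strictly decreasing on [σ⁴/(σ² − 2d²), ∞). Moreover F(0) = 0 and F(x) → d² as x → ∞. -/
/-! The derivative of `F` is `σ²(σ⁴ − (σ² − 2d²)x)/(σ² + x)³`, whose sign on `x ≥ 0` is that of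
the affine numerator `σ⁴ − (σ² − 2d²)x`: it is positive throughout when `σ² ≤ 2d²`, and otherwise
changes sign exactly once, at `x = σ⁴/(σ² − 2d²)`. The limit follows by dividing numerator and
denominator by `x²`. -/

open Set Filter Topology

noncomputable section

def fidelityError (σ d x : ℝ) : ℝ := x * (σ ^ 4 + x * d ^ 2) / (σ ^ 2 + x) ^ 2

variable {σ d : ℝ}

theorem hasDerivAt_fidelityError {x : ℝ} (hx : σ ^ 2 + x ≠ 0) :
    HasDerivAt (fidelityError σ d)
      (σ ^ 2 * (σ ^ 4 - (σ ^ 2 - 2 * d ^ 2) * x) / (σ ^ 2 + x) ^ 3) x := by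
  have hnum : HasDerivAt (fun x : ℝ => x * (σ ^ 4 + x * d ^ 2))
      (1 * (σ ^ 4 + x * d ^ 2) + x * (0 + 1 * d ^ 2)) x :=
    (hasDerivAt_id x).mul ((hasDerivAt_const x _).add ((hasDerivAt_id x).mul_const _))
  have hden : HasDerivAt (fun x : ℝ => (σ ^ 2 + x) ^ 2) (2 * (σ ^ 2 + x) ^ 1 * 1) x :=
    ((hasDerivAt_id x).const_add _).pow 2
  refine (hnum.div hden (pow_ne_zero 2 hx)).congr_deriv ?_
  field_simp
  ring

theorem hasDerivWithinAt_fidelityError_of_nonneg (hσ : σ ≠ 0) {s : Set ℝ} {x : ℝ} (hx : 0 ≤ x) :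
    HasDerivWithinAt (fidelityError σ d)
      (σ ^ 2 * (σ ^ 4 - (σ ^ 2 - 2 * d ^ 2) * x) / (σ ^ 2 + x) ^ 3) s x :=
  (hasDerivAt_fidelityError (by positivity)).hasDerivWithinAt

theorem continuousOn_fidelityError (hσ : σ ≠ 0) : ContinuousOn (fidelityError σ d) (Ici 0) :=
  fun _ hx => (hasDerivWithinAt_fidelityError_of_nonneg (d := d) hσ hx).continuousWithinAt

theorem strictMonoOn_fidelityError {s : Set ℝ} (hs : Convex ℝ s) (hs₀ : s ⊆ Ici 0) (hσ : σ ≠ 0)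
    (h : ∀ x ∈ interior s, (σ ^ 2 - 2 * d ^ 2) * x < σ ^ 4) :
    StrictMonoOn (fidelityError σ d) s :=
  strictMonoOn_of_hasDerivWithinAt_pos hs ((continuousOn_fidelityError hσ).mono hs₀)
    (fun _ hx => hasDerivWithinAt_fidelityError_of_nonneg hσ (hs₀ (interior_subset hx)))
    fun x hx => by
      have : 0 ≤ x := hs₀ (interior_subset hx)
      have : 0 < σ ^ 4 - (σ ^ 2 - 2 * d ^ 2) * x := sub_pos.mpr (h x hx)
      positivity

theorem strictAntiOn_fidelityError {s : Set ℝ} (hs : Convex ℝ s) (hs₀ : s ⊆ Ici 0) (hσ : σ ≠ 0)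
    (h : ∀ x ∈ interior s, σ ^ 4 < (σ ^ 2 - 2 * d ^ 2) * x) :
    StrictAntiOn (fidelityError σ d) s :=
  strictAntiOn_of_hasDerivWithinAt_neg hs ((continuousOn_fidelityError hσ).mono hs₀)
    (fun _ hx => hasDerivWithinAt_fidelityError_of_nonneg hσ (hs₀ (interior_subset hx)))
    fun x hx => by
      have : 0 ≤ x := hs₀ (interior_subset hx)
      exact div_neg_of_neg_of_pos
        (mul_neg_of_pos_of_neg (by positivity) (sub_neg.mpr (h x hx))) (by positivity)

theorem tendsto_fidelityError_atTop : Tendsto (fidelityError σ d) atTop (𝓝 (d ^ 2)) := by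
  have hlim : Tendsto (fun x : ℝ => (σ ^ 4 / x + d ^ 2) / (σ ^ 2 / x + 1) ^ 2) atTop
      (𝓝 ((0 + d ^ 2) / (0 + 1) ^ 2)) :=
    ((tendsto_const_nhds.div_atTop tendsto_id).add tendsto_const_nhds).div
      (((tendsto_const_nhds.div_atTop tendsto_id).add tendsto_const_nhds).pow 2) (by norm_num)
  rw [zero_add, zero_add, one_pow, div_one] at hlim
  refine hlim.congr' ?_
  filter_upwards [eventually_gt_atTop 0] with x hx
  have : σ ^ 2 + x ≠ 0 := by positivity
  simp only [fidelityError]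
  field_simp

end

theorem fidelity_error_monotonicity_general (σ d : ℝ) (hσ : 0 < σ)
    (F : ℝ → ℝ) (hF : ∀ x, F x = x * (σ ^ 4 + x * d ^ 2) / (σ ^ 2 + x) ^ 2) :
    (2 * d ^ 2 ≥ σ ^ 2 → StrictMonoOn F (Set.Ici 0)) ∧
    (2 * d ^ 2 < σ ^ 2 →
      StrictMonoOn F (Set.Icc 0 (σ ^ 4 / (σ ^ 2 - 2 * d ^ 2))) ∧
      StrictAntiOn F (Set.Ici (σ ^ 4 / (σ ^ 2 - 2 * d ^ 2)))) ∧
    F 0 = 0 ∧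
    Filter.Tendsto F Filter.atTop (nhds (d ^ 2)) := by
  obtain rfl : F = fidelityError σ d := funext hF
  refine ⟨fun hge => ?_, fun hlt => ?_, by simp [fidelityError], tendsto_fidelityError_atTop⟩
  · refine strictMonoOn_fidelityError (convex_Ici 0) subset_rfl hσ.ne' fun x hx => ?_
    rw [interior_Ici] at hx
    calc (σ ^ 2 - 2 * d ^ 2) * x ≤ 0 := mul_nonpos_of_nonpos_of_nonneg (by linarith) hx.le
      _ < σ ^ 4 := by positivity
  · have hc : 0 < σ ^ 2 - 2 * d ^ 2 := sub_pos.mpr hlt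
    refine ⟨strictMonoOn_fidelityError (convex_Icc _ _) Icc_subset_Ici_self hσ.ne' fun x hx => ?_,
      strictAntiOn_fidelityError (convex_Ici _) (Ici_subset_Ici.mpr (by positivity)) hσ.ne'
        fun x hx => ?_⟩
    · rw [interior_Icc] at hx
      exact (lt_div_iff₀' hc).mp hx.2
    · rw [interior_Ici] at hx
      exact (div_lt_iff₀' hc).mp hx

/-- Monotonicity properties of the fidelity error `F(x) = x(σ⁴ + x d²)/(σ² + x)²`
as a function of the signal noise variance `x`: if `2d² ≥ σ²` it is strictly
increasing on `[0, ∞)`; if `2d² < σ²` it is strictly increasing on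
`[0, σ⁴/(σ² − 2d²)]` and strictly decreasing on `[σ⁴/(σ² − 2d²), ∞)`.
Moreover `F(0) = 0` and `F(x) → d²` as `x → ∞`. -/
theorem fidelity_error_monotonicity (σ d : ℝ) (hσ : 0 < σ) (hd : 0 ≤ d)
    (F : ℝ → ℝ) (hF : ∀ x, F x = x * (σ ^ 4 + x * d ^ 2) / (σ ^ 2 + x) ^ 2) :
    (2 * d ^ 2 ≥ σ ^ 2 → StrictMonoOn F (Set.Ici 0)) ∧
    (2 * d ^ 2 < σ ^ 2 →
      StrictMonoOn F (Set.Icc 0 (σ ^ 4 / (σ ^ 2 - 2 * d ^ 2))) ∧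
      StrictAntiOn F (Set.Ici (σ ^ 4 / (σ ^ 2 - 2 * d ^ 2)))) ∧
    F 0 = 0 ∧
    Filter.Tendsto F Filter.atTop (nhds (d ^ 2)) :=
  fidelity_error_monotonicity_general σ d hσ F hF
end

section
/- Fix σ > 0, γ > 0 and d ≥ 0 with d² > σ² and d² ≥ σ²/2 + γ/4. Let Δ = σ⁴ + 4γ·(d² − σ²) and w₁ = (−σ² + √Δ)/(4·(d² − σ²)). Then w₁ ∈ (0, 1] and w₁ is a global minimizer of g_d(w) = w(1 − w)·σ² + w²·d² − (γ/2)·ln w over (0, 1]. -/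
/-!
Expanded, `g_d(w) = (d² − σ²)w² + σ²w − (γ/2) ln w`, a convex function of `w > 0`, and `w₁` is the
positive root of its first-order condition `2(d² − σ²)w² + σ²w = γ/2`, which lies in `(0, 1]` exactly
when `d² ≥ σ²/2 + γ/4`. The tangent line bound `ln x ≤ x − 1` at `x = w/w₁` turns the first-order
condition into global minimality on `(0, ∞)`.
-/

open Real

/-- The positive root of `A x² + B x = C` when `A, C > 0`. -/
noncomputable def posRoot (A B C : ℝ) : ℝ :=
  (-B + √(B ^ 2 + 4 * A * C)) / (2 * A)

section posRoot

variable {A B C : ℝ}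

theorem posRoot_pos (hA : 0 < A) (hC : 0 < C) : 0 < posRoot A B C := by
  have : B < √(B ^ 2 + 4 * A * C) := Real.lt_sqrt_of_sq_lt (by nlinarith)
  exact div_pos (by linarith) (by linarith)

theorem posRoot_le_one (hA : 0 < A) (hC : 0 ≤ C) (h : C ≤ A + B) : posRoot A B C ≤ 1 := by
  have : √(B ^ 2 + 4 * A * C) ≤ 2 * A + B :=
    (Real.sqrt_le_left (by linarith)).2 (by nlinarith)
  rw [posRoot, div_le_one (by linarith)]
  linarith

theorem posRoot_eq (hA : A ≠ 0) (hΔ : 0 ≤ B ^ 2 + 4 * A * C) :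
    A * posRoot A B C ^ 2 + B * posRoot A B C = C := by
  have hs := Real.sq_sqrt hΔ
  rw [posRoot]
  generalize √(B ^ 2 + 4 * A * C) = s at hs
  field_simp
  linear_combination hs

end posRoot

theorem quadratic_sub_log_le_of_critical {a b c w₀ w : ℝ} (ha : 0 ≤ a) (hc : 0 ≤ c)
    (hw₀ : 0 < w₀) (hw : 0 < w) (hcrit : 2 * a * w₀ ^ 2 + b * w₀ = c) :
    a * w₀ ^ 2 + b * w₀ - c * log w₀ ≤ a * w ^ 2 + b * w - c * log w := by
  have hlog : log w - log w₀ ≤ w / w₀ - 1 := by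
    rw [← Real.log_div hw.ne' hw₀.ne']
    exact Real.log_le_sub_one_of_pos (div_pos hw hw₀)
  have hslope : c * (w / w₀ - 1) = (2 * a * w₀ + b) * (w - w₀) := by
    rw [← hcrit]
    field_simp
  have htangent : c * (log w - log w₀) ≤ (2 * a * w₀ + b) * (w - w₀) :=
    hslope ▸ mul_le_mul_of_nonneg_left hlog hc
  nlinarith [mul_nonneg ha (sq_nonneg (w - w₀))]

theorem interior_minimizer_general (σ γ d w₁ : ℝ) (hγ : 0 < γ)
    (h1 : d ^ 2 > σ ^ 2) (h2 : d ^ 2 ≥ σ ^ 2 / 2 + γ / 4)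
    (hw₁ : w₁ = (-σ ^ 2 + Real.sqrt (σ ^ 4 + 4 * γ * (d ^ 2 - σ ^ 2)))
      / (4 * (d ^ 2 - σ ^ 2))) :
    w₁ ∈ Set.Ioc (0 : ℝ) 1 ∧
    ∀ w ∈ Set.Ioc (0 : ℝ) 1,
      w₁ * (1 - w₁) * σ ^ 2 + w₁ ^ 2 * d ^ 2 - γ / 2 * Real.log w₁
        ≤ w * (1 - w) * σ ^ 2 + w ^ 2 * d ^ 2 - γ / 2 * Real.log w := by
  have ha : 0 < d ^ 2 - σ ^ 2 := by linarith
  have hw₁_root : w₁ = posRoot (2 * (d ^ 2 - σ ^ 2)) (σ ^ 2) (γ / 2) := by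
    rw [hw₁, posRoot]
    ring_nf
  have hpos : 0 < w₁ := hw₁_root ▸ posRoot_pos (by positivity) (by positivity)
  have hcrit : 2 * (d ^ 2 - σ ^ 2) * w₁ ^ 2 + σ ^ 2 * w₁ = γ / 2 :=
    hw₁_root ▸ posRoot_eq (by positivity) (by positivity)
  refine ⟨⟨hpos, hw₁_root ▸ posRoot_le_one (by positivity) (by positivity) (by linarith)⟩, ?_⟩
  rintro w ⟨hw, -⟩
  have key := quadratic_sub_log_le_of_critical ha.le (by positivity) hpos hw hcrit
  linarith

/-- For a sufficiently unique user (`d² > σ²` and `d² ≥ σ²/2 + γ/4`), the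
interior critical point `w₁ = (−σ² + √Δ)/(4(d² − σ²))` with
`Δ = σ⁴ + 4γ(d² − σ²)` lies in `(0, 1]` and globally minimizes the expected
utility loss `g_d(w) = w(1 − w)σ² + w²d² − (γ/2)·ln w` over `(0, 1]`. -/
theorem interior_minimizer (σ γ d w₁ : ℝ) (hσ : 0 < σ) (hγ : 0 < γ) (hd : 0 ≤ d)
    (h1 : d ^ 2 > σ ^ 2) (h2 : d ^ 2 ≥ σ ^ 2 / 2 + γ / 4)
    (hw₁ : w₁ = (-σ ^ 2 + Real.sqrt (σ ^ 4 + 4 * γ * (d ^ 2 - σ ^ 2)))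
      / (4 * (d ^ 2 - σ ^ 2))) :
    w₁ ∈ Set.Ioc (0 : ℝ) 1 ∧
    ∀ w ∈ Set.Ioc (0 : ℝ) 1,
      w₁ * (1 - w₁) * σ ^ 2 + w₁ ^ 2 * d ^ 2 - γ / 2 * Real.log w₁
        ≤ w * (1 - w) * σ ^ 2 + w ^ 2 * d ^ 2 - γ / 2 * Real.log w :=
  interior_minimizer_general σ γ d w₁ hγ h1 h2 hw₁
end

section
/- Fix σ > 0 and γ > σ², and let d ≥ 0 satisfy d² < σ²/2 + γ/4. Then w = 1 is a global minimizer of g_d(w) = w(1 − w)·σ² + w²·d² − (γ/2)·ln w over (0, 1], with value g_d(1) = d². That is, for users whose uniqueness is below the threshold, accepting the AI's default output (sending the uninformative signal) is optimal. -/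
lemma log_le_quad {w : ℝ} (hw : 0 < w) (hw1 : w ≤ 1) :
    Real.log w ≤ (w - 1) - (w - 1) ^ 2 / 2 := by
  have key : MonotoneOn (fun w : ℝ => Real.log w - ((w - 1) - (w - 1) ^ 2 / 2))
      (Set.Ioc (0 : ℝ) 1) := by
    apply monotoneOn_of_deriv_nonneg (convex_Ioc 0 1)
    · apply ContinuousOn.sub
      · exact Real.continuousOn_log.mono (fun x hx => ne_of_gt hx.1)
      · fun_prop
    · intro x hx
      rw [interior_Ioc] at hx
      apply DifferentiableAt.differentiableWithinAt
      apply DifferentiableAt.sub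
      · exact Real.differentiableAt_log (ne_of_gt hx.1)
      · fun_prop
    · intro x hx
      rw [interior_Ioc] at hx
      have hx0 : x ≠ 0 := ne_of_gt hx.1
      have hd : HasDerivAt (fun w : ℝ => Real.log w - ((w - 1) - (w - 1) ^ 2 / 2))
          (x⁻¹ - (1 - 2 * (x - 1) / 2)) x := by
        have h1 : HasDerivAt Real.log x⁻¹ x := Real.hasDerivAt_log hx0
        have h2 : HasDerivAt (fun w : ℝ => (w - 1) - (w - 1) ^ 2 / 2)
            (1 - 2 * (x - 1) / 2) x := by
          have : HasDerivAt (fun w : ℝ => (w - 1) - (w - 1) ^ 2 / 2)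
              (1 - (2 * (x - 1) ^ 1 * 1) / 2) x := by
            apply HasDerivAt.sub
            · simpa using (hasDerivAt_id x).sub_const 1
            · exact (((hasDerivAt_id x).sub_const 1).pow 2).div_const 2
          simpa using this
        exact h1.sub h2
      rw [hd.deriv]
      have hx0' : (0:ℝ) < x := hx.1
      have : x⁻¹ - (1 - 2 * (x - 1) / 2) = (x - 1) ^ 2 / x := by
        field_simp; ring
      rw [this]
      positivity
  have h1 : (1:ℝ) ∈ Set.Ioc (0:ℝ) 1 := by constructor <;> norm_num
  have hw' : w ∈ Set.Ioc (0:ℝ) 1 := ⟨hw, hw1⟩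
  have := key hw' h1 hw1
  simp only [Real.log_one] at this
  nlinarith [this]

/-- For a common enough user (`d² < σ²/2 + γ/4`) when the interaction cost is
large (`γ > σ²`), the uninformative signal `w = 1` globally minimizes the
expected utility loss `g_d(w) = w(1 − w)σ² + w²d² − (γ/2)·ln w` over `(0, 1]`,
with value `g_d(1) = d²`. -/
theorem default_output_optimal (σ γ d : ℝ) (hσ : 0 < σ) (hγ : γ > σ ^ 2) (hd : 0 ≤ d)
    (h : d ^ 2 < σ ^ 2 / 2 + γ / 4) :
    (∀ w ∈ Set.Ioc (0 : ℝ) 1,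
      1 * (1 - 1) * σ ^ 2 + 1 ^ 2 * d ^ 2 - γ / 2 * Real.log 1
        ≤ w * (1 - w) * σ ^ 2 + w ^ 2 * d ^ 2 - γ / 2 * Real.log w) ∧
    1 * (1 - 1) * σ ^ 2 + 1 ^ 2 * d ^ 2 - γ / 2 * Real.log 1 = d ^ 2 := by
  constructor
  · intro w hw
    obtain ⟨hw0, hw1⟩ := hw
    simp only [Real.log_one]
    have hlog := log_le_quad hw0 hw1
    have hγ0 : (0:ℝ) < γ := lt_trans (by positivity) hγ
    have hmul : γ / 2 * Real.log w ≤ γ / 2 * ((w - 1) - (w - 1) ^ 2 / 2) := by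
      apply mul_le_mul_of_nonneg_left hlog (by linarith)
    -- reduce to polynomial inequality
    have key : d ^ 2 ≤ w * (1 - w) * σ ^ 2 + w ^ 2 * d ^ 2
        - γ / 2 * ((w - 1) - (w - 1) ^ 2 / 2) := by
      rcases le_or_gt (σ ^ 2 - γ / 4 - d ^ 2) 0 with hc | hc
      · nlinarith [mul_nonneg (sub_nonneg.2 hw1) hw0.le, sq_nonneg (1 - w),
          mul_nonneg (sub_nonneg.2 hw1) (sq_nonneg d),
          mul_nonneg (mul_nonneg (sub_nonneg.2 hw1) (sub_nonneg.2 hw1)) hw0.le]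
      · nlinarith [mul_nonneg (sub_nonneg.2 hw1) hw0.le, sq_nonneg (1 - w),
          mul_nonneg (mul_nonneg (sub_nonneg.2 hw1) (sub_nonneg.2 hw1)) hc.le,
          mul_nonneg (sub_nonneg.2 hw1) hc.le]
    linarith
  · simp [Real.log_one]
end

section
/- Fix σ, σ_A, γ > 0 and define, for d ≥ 0, the optimal utility loss V(d) = min( d², inf_{σ_U ∈ (0, ∞)} [ σ_U²·(σ_A⁴ + σ_U²·d²)/(σ_A² + σ_U²)² + (γ/2)·ln((σ² + σ_U²)/σ_U²) ] ), where the term d² is the loss of the uninformative signal σ_U = ∞. Then V is strictly increasing: 0 ≤ d₁ < d₂ implies V(d₁) < V(d₂). In particular, a user's optimal utility loss strictly increases with the distance |μ_A − θ| of her preference from the AI prior mean. -/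
lemma fidelity_mono_aux (σA u₀ u a : ℝ) (hA : 0 < σA) (h0 : 0 < u₀) (h : u₀ ≤ u)
    (ha : 0 ≤ a) :
    a * u₀ ^ 4 / (σA ^ 2 + u₀ ^ 2) ^ 2 ≤ a * u ^ 4 / (σA ^ 2 + u ^ 2) ^ 2 := by
  have hu : 0 < u := lt_of_lt_of_le h0 h
  rw [div_le_div_iff₀ (by positivity) (by positivity)]
  have hsq : u₀ ^ 2 ≤ u ^ 2 := by nlinarith
  have hab : u₀ ^ 2 * (σA ^ 2 + u ^ 2) ≤ u ^ 2 * (σA ^ 2 + u₀ ^ 2) := by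
    nlinarith [sq_nonneg σA]
  have h4 : u₀ ^ 4 * (σA ^ 2 + u ^ 2) ^ 2 ≤ u ^ 4 * (σA ^ 2 + u₀ ^ 2) ^ 2 := by
    nlinarith [mul_self_le_mul_self
      (by positivity : (0:ℝ) ≤ u₀ ^ 2 * (σA ^ 2 + u ^ 2)) hab]
  nlinarith [mul_le_mul_of_nonneg_left h4 ha]

lemma split_aux (σ σA γ d₁ d₂ u : ℝ) :
    u ^ 2 * (σA ^ 4 + u ^ 2 * d₂ ^ 2) / (σA ^ 2 + u ^ 2) ^ 2
      + γ / 2 * Real.log ((σ ^ 2 + u ^ 2) / u ^ 2)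
    = (u ^ 2 * (σA ^ 4 + u ^ 2 * d₁ ^ 2) / (σA ^ 2 + u ^ 2) ^ 2
      + γ / 2 * Real.log ((σ ^ 2 + u ^ 2) / u ^ 2))
      + (d₂ ^ 2 - d₁ ^ 2) * u ^ 4 / (σA ^ 2 + u ^ 2) ^ 2 := by
  ring

/-- The optimal utility loss
`V(d) = min(d², inf_{σU > 0} [σU²(σA⁴ + σU²d²)/(σA² + σU²)² + (γ/2)·ln((σ² + σU²)/σU²)])`
is strictly increasing in the uniqueness `d = |μA − θ|`. -/
theorem optimal_loss_strictMono (σ σA γ : ℝ) (hσ : 0 < σ) (hA : 0 < σA) (hγ : 0 < γ)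
    (V : ℝ → ℝ)
    (hV : ∀ d, V d = min (d ^ 2)
      (⨅ σU : Set.Ioi (0 : ℝ),
        (σU : ℝ) ^ 2 * (σA ^ 4 + (σU : ℝ) ^ 2 * d ^ 2) / (σA ^ 2 + (σU : ℝ) ^ 2) ^ 2
          + γ / 2 * Real.log ((σ ^ 2 + (σU : ℝ) ^ 2) / (σU : ℝ) ^ 2))) :
    ∀ d₁ d₂ : ℝ, 0 ≤ d₁ → d₁ < d₂ → V d₁ < V d₂ := by
  intro d₁ d₂ hd₁ hlt
  haveI : Nonempty (Set.Ioi (0 : ℝ)) := ⟨⟨1, by norm_num⟩⟩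
  -- the objective as a function on reals
  set f : ℝ → ℝ → ℝ := fun d u =>
    u ^ 2 * (σA ^ 4 + u ^ 2 * d ^ 2) / (σA ^ 2 + u ^ 2) ^ 2
      + γ / 2 * Real.log ((σ ^ 2 + u ^ 2) / u ^ 2) with hf
  have hV' : ∀ d, V d = min (d ^ 2) (⨅ u : Set.Ioi (0 : ℝ), f d (u : ℝ)) := hV
  have hd₂ : 0 < d₂ := lt_of_le_of_lt hd₁ hlt
  have hdd : d₁ ^ 2 < d₂ ^ 2 := by nlinarith
  -- nonnegativity of the objective
  have hfnonneg : ∀ d u : ℝ, 0 ≤ d → 0 < u → 0 ≤ f d u := by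
    intro d u hd hu
    have h1 : 0 ≤ u ^ 2 * (σA ^ 4 + u ^ 2 * d ^ 2) / (σA ^ 2 + u ^ 2) ^ 2 := by positivity
    have h2 : 0 ≤ Real.log ((σ ^ 2 + u ^ 2) / u ^ 2) := by
      apply Real.log_nonneg
      rw [le_div_iff₀ (by positivity)]
      nlinarith
    simp only [hf]
    nlinarith
  have hbdd : ∀ d : ℝ, 0 ≤ d →
      BddBelow (Set.range fun u : Set.Ioi (0 : ℝ) => f d (u : ℝ)) := by
    intro d hd
    refine ⟨0, ?_⟩
    rintro x ⟨u, rfl⟩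
    exact hfnonneg d u hd u.2
  -- the small threshold u₀
  set E := Real.exp (d₂ ^ 2 / (γ / 2)) with hE
  have hEpos : 0 < E := Real.exp_pos _
  obtain ⟨u₀, hu₀pos, hu₀sq⟩ : ∃ u₀ : ℝ, 0 < u₀ ∧ u₀ ^ 2 = σ ^ 2 / E :=
    ⟨σ / Real.sqrt E, div_pos hσ (Real.sqrt_pos.mpr hEpos), by
      rw [div_pow, Real.sq_sqrt hEpos.le]⟩
  have hu₀sqpos : 0 < u₀ ^ 2 := by positivity
  -- the gap
  obtain ⟨ε₁, hε₁def⟩ : ∃ e : ℝ, e = (d₂ ^ 2 - d₁ ^ 2) * u₀ ^ 4 / (σA ^ 2 + u₀ ^ 2) ^ 2 :=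
    ⟨_, rfl⟩
  have hε₁ : 0 < ε₁ := by
    rw [hε₁def]
    apply div_pos
    · apply mul_pos (by linarith) (by positivity)
    · positivity
  set ε := min ε₁ (d₂ ^ 2 - d₁ ^ 2) with hεdef
  have hε : 0 < ε := lt_min hε₁ (by linarith)
  have hV₁le : V d₁ ≤ d₁ ^ 2 := by rw [hV' d₁]; exact min_le_left _ _
  have hV₁inf : V d₁ ≤ ⨅ u : Set.Ioi (0 : ℝ), f d₁ (u : ℝ) := by
    rw [hV' d₁]; exact min_le_right _ _
  have key : V d₁ + ε ≤ V d₂ := by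
    rw [hV' d₂]
    apply le_min
    · have : ε ≤ d₂ ^ 2 - d₁ ^ 2 := min_le_right _ _
      linarith
    · apply le_ciInf
      rintro ⟨u, hu⟩
      have hu' : 0 < u := hu
      rcases le_or_gt u₀ u with h | h
      · -- large u : use the strict increase in d of the fidelity term
        have hεle : ε ≤ ε₁ := min_le_left _ _
        have hinfle : (⨅ u : Set.Ioi (0 : ℝ), f d₁ (u : ℝ)) ≤ f d₁ u :=
          ciInf_le (hbdd d₁ hd₁) ⟨u, hu⟩
        have hg : ε₁ ≤ (d₂ ^ 2 - d₁ ^ 2) * u ^ 4 / (σA ^ 2 + u ^ 2) ^ 2 := by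
          rw [hε₁def]
          exact fidelity_mono_aux σA u₀ u _ hA hu₀pos h (by linarith)
        have heq : f d₂ u = f d₁ u + (d₂ ^ 2 - d₁ ^ 2) * u ^ 4 / (σA ^ 2 + u ^ 2) ^ 2 :=
          split_aux σ σA γ d₁ d₂ u
        rw [heq]
        exact add_le_add (hV₁inf.trans hinfle) (hεle.trans hg)
      · -- small u : the communication cost alone exceeds d₂²
        have hfid : 0 ≤ u ^ 2 * (σA ^ 4 + u ^ 2 * d₂ ^ 2) / (σA ^ 2 + u ^ 2) ^ 2 := by
          positivity
        have hElog : Real.exp (d₂ ^ 2 / (γ / 2)) ≤ (σ ^ 2 + u ^ 2) / u ^ 2 := by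
          rw [← hE]
          have h1 : E = σ ^ 2 / u₀ ^ 2 := by
            rw [hu₀sq]; field_simp
          have h2 : σ ^ 2 / u₀ ^ 2 ≤ σ ^ 2 / u ^ 2 := by
            apply div_le_div_of_nonneg_left (by positivity) (by positivity)
            nlinarith
          have h3 : σ ^ 2 / u ^ 2 ≤ (σ ^ 2 + u ^ 2) / u ^ 2 := by
            apply div_le_div_of_nonneg_right ?_ (by positivity)
            nlinarith
          linarith [h1 ▸ le_trans h2 h3]
        have hlog : d₂ ^ 2 / (γ / 2) ≤ Real.log ((σ ^ 2 + u ^ 2) / u ^ 2) := by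
          calc d₂ ^ 2 / (γ / 2) = Real.log (Real.exp (d₂ ^ 2 / (γ / 2))) := by
                rw [Real.log_exp]
            _ ≤ _ := Real.log_le_log (Real.exp_pos _) hElog
        have hcost : d₂ ^ 2 ≤ γ / 2 * Real.log ((σ ^ 2 + u ^ 2) / u ^ 2) := by
          have hγ2 : 0 < γ / 2 := by linarith
          calc d₂ ^ 2 = γ / 2 * (d₂ ^ 2 / (γ / 2)) := by field_simp
            _ ≤ γ / 2 * Real.log ((σ ^ 2 + u ^ 2) / u ^ 2) := by
                exact mul_le_mul_of_nonneg_left hlog hγ2.le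
        have hεle : ε ≤ d₂ ^ 2 - d₁ ^ 2 := min_le_right _ _
        have : d₂ ^ 2 ≤ f d₂ u := by
          simp only [hf]
          linarith
        linarith
  linarith
end

section
/- Fix σ > 0, γ > 0 and 0 ≤ d₁ < d₂. If w₁ ∈ (0, 1] is a global minimizer over (0, 1] of g_{d₁}(w) = w(1 − w)σ² + w²·d₁² − (γ/2)·ln w, and w₂ ∈ (0, 1] is a global minimizer over (0, 1] of g_{d₂}(w) = w(1 − w)σ² + w²·d₂² − (γ/2)·ln w, then w₂ ≤ w₁. That is, more unique users choose more informative signals: the optimal weight is nonincreasing (equivalently, the communication cost −(1/2)·ln w is nondecreasing) in the uniqueness d = |θ − μ|. -/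
/-! Revealed preference: adding the two minimality inequalities cancels the `d`-free part of the
loss and leaves `(d₂² - d₁²)(w₂² - w₁²) ≤ 0`. -/

theorem le_of_isMinOn_add_mul_of_lt {α : Type*} {S : Set α} {f φ : α → ℝ} {s t : ℝ} {x y : α}
    (hst : s < t) (hxS : x ∈ S) (hyS : y ∈ S)
    (hx : IsMinOn (fun w ↦ f w + s * φ w) S x) (hy : IsMinOn (fun w ↦ f w + t * φ w) S y) :
    φ y ≤ φ x := by
  have hxy : f x + s * φ x ≤ f y + s * φ y := hx hyS
  have hyx : f y + t * φ y ≤ f x + t * φ x := hy hxS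
  have hprod : (t - s) * (φ y - φ x) ≤ 0 := by linarith
  exact sub_nonpos.mp (nonpos_of_mul_nonpos_right hprod (sub_pos.mpr hst))

theorem optimal_weight_antitone_general (σ γ d₁ d₂ w₁ w₂ : ℝ)
    (hd₁ : 0 ≤ d₁) (hd : d₁ < d₂)
    (hw₁ : w₁ ∈ Set.Ioc (0 : ℝ) 1) (hw₂ : w₂ ∈ Set.Ioc (0 : ℝ) 1)
    (hmin₁ : ∀ w ∈ Set.Ioc (0 : ℝ) 1,
      w₁ * (1 - w₁) * σ ^ 2 + w₁ ^ 2 * d₁ ^ 2 - γ / 2 * Real.log w₁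
        ≤ w * (1 - w) * σ ^ 2 + w ^ 2 * d₁ ^ 2 - γ / 2 * Real.log w)
    (hmin₂ : ∀ w ∈ Set.Ioc (0 : ℝ) 1,
      w₂ * (1 - w₂) * σ ^ 2 + w₂ ^ 2 * d₂ ^ 2 - γ / 2 * Real.log w₂
        ≤ w * (1 - w) * σ ^ 2 + w ^ 2 * d₂ ^ 2 - γ / 2 * Real.log w) :
    w₂ ≤ w₁ := by
  have hsq : w₂ ^ 2 ≤ w₁ ^ 2 :=
    le_of_isMinOn_add_mul_of_lt (φ := fun w ↦ w ^ 2)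
      (f := fun w ↦ w * (1 - w) * σ ^ 2 - γ / 2 * Real.log w)
      (pow_lt_pow_left₀ hd hd₁ two_ne_zero) hw₁ hw₂
      (isMinOn_iff.mpr fun w hw ↦ by linarith [hmin₁ w hw])
      (isMinOn_iff.mpr fun w hw ↦ by linarith [hmin₂ w hw])
  exact (pow_le_pow_iff_left₀ hw₂.1.le hw₁.1.le two_ne_zero).mp hsq

/-- More unique users choose more informative signals: if `w₁` minimizes the
utility loss for uniqueness `d₁` and `w₂` minimizes it for uniqueness `d₂ > d₁`,
then `w₂ ≤ w₁` (the optimal weight on the AI prior mean is nonincreasing in the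
uniqueness, equivalently the communication cost `−(1/2)·ln w` is nondecreasing). -/
theorem optimal_weight_antitone (σ γ d₁ d₂ w₁ w₂ : ℝ) (hσ : 0 < σ) (hγ : 0 < γ)
    (hd₁ : 0 ≤ d₁) (hd : d₁ < d₂)
    (hw₁ : w₁ ∈ Set.Ioc (0 : ℝ) 1) (hw₂ : w₂ ∈ Set.Ioc (0 : ℝ) 1)
    (hmin₁ : ∀ w ∈ Set.Ioc (0 : ℝ) 1,
      w₁ * (1 - w₁) * σ ^ 2 + w₁ ^ 2 * d₁ ^ 2 - γ / 2 * Real.log w₁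
        ≤ w * (1 - w) * σ ^ 2 + w ^ 2 * d₁ ^ 2 - γ / 2 * Real.log w)
    (hmin₂ : ∀ w ∈ Set.Ioc (0 : ℝ) 1,
      w₂ * (1 - w₂) * σ ^ 2 + w₂ ^ 2 * d₂ ^ 2 - γ / 2 * Real.log w₂
        ≤ w * (1 - w) * σ ^ 2 + w ^ 2 * d₂ ^ 2 - γ / 2 * Real.log w) :
    w₂ ≤ w₁ :=
  optimal_weight_antitone_general σ γ d₁ d₂ w₁ w₂ hd₁ hd hw₁ hw₂ hmin₁ hmin₂
end

section
/- Fix σ > 0 and γ > 0, and define, for d ≥ 0, V(d) = min( d², inf_{σ_U ∈ (0, ∞)} [ σ_U²·(σ⁴ + σ_U²·d²)/(σ² + σ_U²)² + (γ/2)·ln((σ² + σ_U²)/σ_U²) ] ). Then for every Γ > 0 there exists τ > 0 such that for all d ≥ 0, V(d) ≤ Γ if and only if d ≤ τ. That is, users prefer working with the AI (optimal loss at most the no-AI cost Γ) exactly when their uniqueness is below a threshold. -/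
/-!
Write `t = d ^ 2`. A signal of noise `σU` costs an affine function of `t` whose slope is
`q ^ 2` with `q = σU ^ 2 / (σ ^ 2 + σU ^ 2) ∈ (0, 1]` and whose intercept is at least
`-(γ / 2) log q`. Hence the optimal loss `W t`, the minimum of `t` and the infimum of these
affine functions, is monotone, `1`-Lipschitz and at most `t`; and it tends to infinity, since a
signal has either a slope bounded below or a large communication cost. So `{t | W t ≤ Γ}` is a
closed down-set containing `Γ` and bounded above: an interval `(-∞, τ']` with `τ' ≥ Γ > 0`,
and the threshold is `τ = √τ'`.
-/

open Real Set Filter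

theorem exists_le_iff_le_of_monotone {α β : Type*}
    [ConditionallyCompleteLinearOrder α] [TopologicalSpace α] [OrderTopology α]
    [LinearOrder β] [TopologicalSpace β] [ClosedIicTopology β]
    {f : α → β} (hmono : Monotone f) (hcont : Continuous f) {a b : α} {c : β}
    (ha : f a ≤ c) (hb : c < f b) : ∃ τ, a ≤ τ ∧ ∀ x, f x ≤ c ↔ x ≤ τ := by
  set S := f ⁻¹' Iic c
  have hS : BddAbove S :=
    ⟨b, fun x hx => le_of_not_gt fun hbx => (hb.trans_le (hmono hbx.le)).not_ge hx⟩
  have hτ : sSup S ∈ S := (isClosed_Iic.preimage hcont).csSup_mem ⟨a, ha⟩ hS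
  exact ⟨sSup S, le_csSup hS ha, fun x => ⟨fun hx => le_csSup hS hx, fun hx => (hmono hx).trans hτ⟩⟩

theorem LipschitzWith.ciInf {ι α : Type*} [Nonempty ι] [PseudoMetricSpace α] {K : NNReal}
    {f : ι → α → ℝ} (hf : ∀ i, LipschitzWith K (f i))
    (hbdd : ∀ x, BddBelow (range fun i => f i x)) :
    LipschitzWith K fun x => ⨅ i, f i x :=
  LipschitzWith.of_le_add_mul K fun x y =>
    sub_le_iff_le_add.1 <| le_ciInf fun i =>
      sub_le_iff_le_add.2 <| (ciInf_le (hbdd x) i).trans ((hf i).le_add_mul x y)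

-- The loss as a function of the squared distance `t = d ^ 2`.
noncomputable def signalLoss (σ γ σU t : ℝ) : ℝ :=
  σU ^ 2 * (σ ^ 4 + σU ^ 2 * t) / (σ ^ 2 + σU ^ 2) ^ 2
    + γ / 2 * log ((σ ^ 2 + σU ^ 2) / σU ^ 2)

-- The term `t` is the loss of the uninformative signal `σU = ∞`.
noncomputable def optimalLoss (σ γ t : ℝ) : ℝ :=
  min t (⨅ σU : Ioi (0 : ℝ), signalLoss σ γ σU t)

section signalLoss

variable {γ σU : ℝ}

theorem signalLoss_eq (σ γ σU t : ℝ) :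
    signalLoss σ γ σU t = σU ^ 2 * σ ^ 4 / (σ ^ 2 + σU ^ 2) ^ 2
      + (σU ^ 2 / (σ ^ 2 + σU ^ 2)) ^ 2 * t - γ / 2 * log (σU ^ 2 / (σ ^ 2 + σU ^ 2)) := by
  rw [signalLoss, ← inv_div (σU ^ 2), log_inv, div_pow]
  ring

theorem signalLoss_eq_add_mul (σ γ σU t : ℝ) :
    signalLoss σ γ σU t = signalLoss σ γ σU 0 + (σU ^ 2 / (σ ^ 2 + σU ^ 2)) ^ 2 * t := by
  rw [signalLoss_eq, signalLoss_eq]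
  ring

theorem monotone_signalLoss (σ γ σU : ℝ) : Monotone (signalLoss σ γ σU) := fun s t hst => by
  rw [signalLoss_eq_add_mul _ _ _ s, signalLoss_eq_add_mul _ _ _ t]
  gcongr

theorem div_sq_add_sq_mem_Ioc (σ : ℝ) (hσU : σU ≠ 0) : σU ^ 2 / (σ ^ 2 + σU ^ 2) ∈ Ioc 0 1 := by
  have hσU2 : 0 < σU ^ 2 := by positivity
  exact ⟨by positivity, div_le_one_of_le₀ (by nlinarith [sq_nonneg σ]) (by positivity)⟩

theorem lipschitzWith_signalLoss (σ γ : ℝ) (hσU : σU ≠ 0) :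
    LipschitzWith 1 (signalLoss σ γ σU) := by
  obtain ⟨hq0, hq1⟩ := div_sq_add_sq_mem_Ioc σ hσU
  refine LipschitzWith.of_le_add fun s t => ?_
  rw [signalLoss_eq_add_mul _ _ _ s, signalLoss_eq_add_mul _ _ _ t, Real.dist_eq]
  nlinarith [le_abs_self (s - t), abs_nonneg (s - t), pow_le_one₀ (n := 2) hq0.le hq1]

theorem signalLoss_zero_nonneg (σ : ℝ) (hγ : 0 ≤ γ) (hσU : σU ≠ 0) :
    0 ≤ signalLoss σ γ σU 0 := by
  obtain ⟨hq0, hq1⟩ := div_sq_add_sq_mem_Ioc σ hσU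
  have hcost := mul_nonpos_of_nonneg_of_nonpos (by positivity : 0 ≤ γ / 2) (log_nonpos hq0.le hq1)
  have hfid : 0 ≤ σU ^ 2 * σ ^ 4 / (σ ^ 2 + σU ^ 2) ^ 2 := by positivity
  rw [signalLoss_eq, mul_zero]
  linarith

end signalLoss

theorem le_sq_mul_sub_mul_log {q c M t : ℝ} (hq0 : 0 < q) (hq1 : q ≤ 1) (hc : 0 < c) (hM : 0 ≤ M)
    (ht : M * exp (M / c) ^ 2 ≤ t) : M ≤ q ^ 2 * t - c * log q := by
  have hlog : log q ≤ 0 := log_nonpos hq0.le hq1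
  have ht0 : 0 ≤ t := le_trans (by positivity) ht
  by_cases hqM : -(M / c) ≤ log q
  · have hq : 1 ≤ q * exp (M / c) :=
      calc 1 = exp (-(M / c)) * exp (M / c) := by rw [← exp_add, neg_add_cancel, exp_zero]
        _ ≤ q * exp (M / c) := by gcongr; exact (le_log_iff_exp_le hq0).1 hqM
    calc M ≤ M * (q * exp (M / c)) ^ 2 := le_mul_of_one_le_right hM (one_le_pow₀ hq)
      _ = q ^ 2 * (M * exp (M / c) ^ 2) := by ring
      _ ≤ q ^ 2 * t := by gcongr
      _ ≤ q ^ 2 * t - c * log q := by nlinarith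
  · have : M < -(c * log q) := by
      have := mul_lt_mul_of_pos_left (not_le.1 hqM) hc
      rw [mul_neg, mul_div_cancel₀ _ hc.ne'] at this
      linarith
    nlinarith [mul_nonneg (sq_nonneg q) ht0]

section optimalLoss

variable {γ : ℝ}

theorem bddBelow_range_signalLoss (σ : ℝ) (hγ : 0 ≤ γ) (t : ℝ) :
    BddBelow (range fun σU : Ioi (0 : ℝ) => signalLoss σ γ σU t) := by
  refine ⟨-dist 0 t, forall_mem_range.2 fun σU => ?_⟩
  have hlip := (lipschitzWith_signalLoss σ γ σU.2.ne').le_add_mul 0 t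
  rw [NNReal.coe_one, one_mul] at hlip
  linarith [signalLoss_zero_nonneg σ hγ σU.2.ne']

theorem optimalLoss_le_self (σ γ t : ℝ) : optimalLoss σ γ t ≤ t := min_le_left _ _

theorem monotone_optimalLoss (σ : ℝ) (hγ : 0 ≤ γ) : Monotone (optimalLoss σ γ) :=
  monotone_id.min fun _ _ hst =>
    ciInf_mono (bddBelow_range_signalLoss σ hγ _) fun σU => monotone_signalLoss σ γ σU hst

theorem lipschitzWith_optimalLoss (σ : ℝ) (hγ : 0 ≤ γ) : LipschitzWith 1 (optimalLoss σ γ) := by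
  unfold optimalLoss
  simpa using LipschitzWith.id.min
    (LipschitzWith.ciInf (fun σU => lipschitzWith_signalLoss σ γ σU.2.ne')
      (bddBelow_range_signalLoss σ hγ))

theorem tendsto_iInf_signalLoss_atTop (σ : ℝ) (hγ : 0 < γ) :
    Tendsto (fun t => ⨅ σU : Ioi (0 : ℝ), signalLoss σ γ σU t) atTop atTop := by
  refine (atTop_basis' (0 : ℝ)).tendsto_right_iff.2 fun M hM => ?_
  filter_upwards [eventually_ge_atTop (M * exp (M / (γ / 2)) ^ 2)] with t ht
  refine mem_Ici.2 <| le_ciInf fun σU : Ioi (0 : ℝ) => ?_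
  obtain ⟨hq0, hq1⟩ := div_sq_add_sq_mem_Ioc σ σU.2.ne'
  have hfid : 0 ≤ (σU : ℝ) ^ 2 * σ ^ 4 / (σ ^ 2 + σU ^ 2) ^ 2 := by positivity
  rw [signalLoss_eq]
  linarith [le_sq_mul_sub_mul_log hq0 hq1 (half_pos hγ) hM ht]

theorem tendsto_optimalLoss_atTop (σ : ℝ) (hγ : 0 < γ) : Tendsto (optimalLoss σ γ) atTop atTop :=
  tendsto_inf_atTop atTop tendsto_id (tendsto_iInf_signalLoss_atTop σ hγ)

end optimalLoss

theorem adoption_threshold_general (σ γ : ℝ) (hγ : 0 < γ)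
    (V : ℝ → ℝ)
    (hV : ∀ d, V d = min (d ^ 2)
      (⨅ σU : Set.Ioi (0 : ℝ),
        (σU : ℝ) ^ 2 * (σ ^ 4 + (σU : ℝ) ^ 2 * d ^ 2) / (σ ^ 2 + (σU : ℝ) ^ 2) ^ 2
          + γ / 2 * Real.log ((σ ^ 2 + (σU : ℝ) ^ 2) / (σU : ℝ) ^ 2))) :
    ∀ Γ : ℝ, 0 < Γ → ∃ τ : ℝ, 0 < τ ∧ ∀ d : ℝ, 0 ≤ d → (V d ≤ Γ ↔ d ≤ τ) := by
  intro Γ hΓ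
  have hVW : ∀ d, V d = optimalLoss σ γ (d ^ 2) := hV
  obtain ⟨b, hb⟩ := ((tendsto_optimalLoss_atTop σ hγ).eventually_gt_atTop Γ).exists
  obtain ⟨τ, hΓτ, hτ⟩ := exists_le_iff_le_of_monotone (monotone_optimalLoss σ hγ.le)
    (lipschitzWith_optimalLoss σ hγ.le).continuous (optimalLoss_le_self σ γ Γ) hb
  refine ⟨√τ, sqrt_pos.2 (hΓ.trans_le hΓτ), fun d hd => ?_⟩
  rw [hVW, hτ, le_sqrt hd (hΓ.le.trans hΓτ)]

/-- Threshold structure of AI adoption: for the optimal utility loss `V` in the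
unbiased model, for every no-AI cost `Γ > 0` there is a uniqueness threshold
`τ > 0` such that a user works with the AI (`V(d) ≤ Γ`) iff `d ≤ τ`. -/
theorem adoption_threshold (σ γ : ℝ) (hσ : 0 < σ) (hγ : 0 < γ)
    (V : ℝ → ℝ)
    (hV : ∀ d, V d = min (d ^ 2)
      (⨅ σU : Set.Ioi (0 : ℝ),
        (σU : ℝ) ^ 2 * (σ ^ 4 + (σU : ℝ) ^ 2 * d ^ 2) / (σ ^ 2 + (σU : ℝ) ^ 2) ^ 2
          + γ / 2 * Real.log ((σ ^ 2 + (σU : ℝ) ^ 2) / (σU : ℝ) ^ 2))) :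
    ∀ Γ : ℝ, 0 < Γ → ∃ τ : ℝ, 0 < τ ∧ ∀ d : ℝ, 0 ≤ d → (V d ≤ Γ ↔ d ≤ τ) :=
  adoption_threshold_general σ γ hγ V hV
end

section
/- Fix σ > 0 and γ > 0. For d ≥ 0 with d² > σ² and d² ≥ σ²/2 + γ/4, let w₁(d) = (−σ² + √(σ⁴ + 4γ(d² − σ²)))/(4(d² − σ²)) and define the optimized fidelity error E*(d) = w₁(d)·(1 − w₁(d))·σ² + w₁(d)²·d². Then E* is nonincreasing on this region: if d₁ < d₂ both satisfy d² > σ² and d² ≥ σ²/2 + γ/4, then E*(d₂) ≤ E*(d₁). That is, among users who interact with the AI, the fidelity error decreases with uniqueness. -/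
/-!
At an interior optimum the weight solves the first-order condition `g_d'(w) = 0`, i.e.
`4(d² − σ²)w² + 2σ²w = γ`, and substituting this into the fidelity error collapses it to
`γ/4 + σ²w₁/2`. Rationalizing, `w₁ = γ/(σ² + √(σ⁴ + 4γ(d² − σ²)))`, which visibly decreases
as `d²` grows.
-/

namespace FidelityError

variable {a c x : ℝ}

lemma sqrt_discr_pos (hc : 0 < c) (hx : 0 < x) : 0 < √(a ^ 2 + 4 * c * x) :=
  Real.sqrt_pos.2 (by positivity)

lemma neg_add_sqrt_div_eq_div_add_sqrt (ha : 0 ≤ a) (hc : 0 < c) (hx : 0 < x) :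
    (-a + √(a ^ 2 + 4 * c * x)) / (4 * x) = c / (a + √(a ^ 2 + 4 * c * x)) := by
  have hs : 0 < √(a ^ 2 + 4 * c * x) := sqrt_discr_pos hc hx
  rw [div_eq_div_iff (by positivity) (by positivity)]
  linear_combination Real.sq_sqrt (by positivity : 0 ≤ a ^ 2 + 4 * c * x)

lemma quadratic_div_add_sqrt (ha : 0 ≤ a) (hc : 0 < c) (hx : 0 < x) :
    4 * x * (c / (a + √(a ^ 2 + 4 * c * x))) ^ 2 + 2 * a * (c / (a + √(a ^ 2 + 4 * c * x)))
      = c := by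
  rw [← neg_add_sqrt_div_eq_div_add_sqrt ha hc hx]
  have hs : √(a ^ 2 + 4 * c * x) ^ 2 = a ^ 2 + 4 * c * x := Real.sq_sqrt (by positivity)
  generalize √(a ^ 2 + 4 * c * x) = s at hs ⊢
  field_simp
  linear_combination hs

lemma error_eq_of_quadratic {b w : ℝ} (hw : 4 * (b - a) * w ^ 2 + 2 * a * w = c) :
    w * (1 - w) * a + w ^ 2 * b = c / 4 + a / 2 * w := by
  linear_combination hw / 4

lemma div_add_sqrt_antitone (ha : 0 ≤ a) (hc : 0 < c) (hx : 0 < x) {y : ℝ} (hxy : x ≤ y) :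
    c / (a + √(a ^ 2 + 4 * c * y)) ≤ c / (a + √(a ^ 2 + 4 * c * x)) := by
  have hs : 0 < √(a ^ 2 + 4 * c * x) := sqrt_discr_pos hc hx
  gcongr

end FidelityError

open FidelityError in
theorem fidelity_error_decreases_with_uniqueness_general (σ γ : ℝ) (hγ : 0 < γ)
    (w₁ : ℝ → ℝ)
    (hw₁ : ∀ d, w₁ d = (-σ ^ 2 + Real.sqrt (σ ^ 4 + 4 * γ * (d ^ 2 - σ ^ 2)))
      / (4 * (d ^ 2 - σ ^ 2)))
    (E : ℝ → ℝ)
    (hE : ∀ d, E d = w₁ d * (1 - w₁ d) * σ ^ 2 + (w₁ d) ^ 2 * d ^ 2) :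
    ∀ d₁ d₂ : ℝ, 0 ≤ d₁ → d₁ < d₂ →
      d₁ ^ 2 > σ ^ 2 → d₁ ^ 2 ≥ σ ^ 2 / 2 + γ / 4 →
      d₂ ^ 2 > σ ^ 2 → d₂ ^ 2 ≥ σ ^ 2 / 2 + γ / 4 →
      E d₂ ≤ E d₁ := by
  have hσ : 0 ≤ σ ^ 2 := sq_nonneg σ
  have hw₁' : ∀ d, σ ^ 2 < d ^ 2 →
      w₁ d = γ / (σ ^ 2 + √((σ ^ 2) ^ 2 + 4 * γ * (d ^ 2 - σ ^ 2))) := fun d hd => by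
    rw [hw₁, show σ ^ 4 = (σ ^ 2) ^ 2 by ring,
      neg_add_sqrt_div_eq_div_add_sqrt hσ hγ (sub_pos.2 hd)]
  have hE' : ∀ d, σ ^ 2 < d ^ 2 → E d = γ / 4 + σ ^ 2 / 2 * w₁ d := fun d hd => by
    rw [hE, hw₁' d hd]
    exact error_eq_of_quadratic (quadratic_div_add_sqrt hσ hγ (sub_pos.2 hd))
  intro d₁ d₂ hd₁ hlt h₁ _ h₂ _
  have hsq : d₁ ^ 2 ≤ d₂ ^ 2 := pow_le_pow_left₀ hd₁ hlt.le 2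
  have hw_anti : w₁ d₂ ≤ w₁ d₁ := by
    rw [hw₁' d₁ h₁, hw₁' d₂ h₂]
    exact div_add_sqrt_antitone hσ hγ (sub_pos.2 h₁) (by linarith)
  rw [hE' d₁ h₁, hE' d₂ h₂]
  gcongr

/-- Among users who interact with the AI (`d² > σ²` and `d² ≥ σ²/2 + γ/4`), the
optimized fidelity error `E*(d) = w₁(d)(1 − w₁(d))σ² + w₁(d)²d²`, with optimal
weight `w₁(d) = (−σ² + √(σ⁴ + 4γ(d² − σ²)))/(4(d² − σ²))`, is nonincreasing in
the uniqueness `d`. -/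
theorem fidelity_error_decreases_with_uniqueness (σ γ : ℝ) (hσ : 0 < σ) (hγ : 0 < γ)
    (w₁ : ℝ → ℝ)
    (hw₁ : ∀ d, w₁ d = (-σ ^ 2 + Real.sqrt (σ ^ 4 + 4 * γ * (d ^ 2 - σ ^ 2)))
      / (4 * (d ^ 2 - σ ^ 2)))
    (E : ℝ → ℝ)
    (hE : ∀ d, E d = w₁ d * (1 - w₁ d) * σ ^ 2 + (w₁ d) ^ 2 * d ^ 2) :
    ∀ d₁ d₂ : ℝ, 0 ≤ d₁ → d₁ < d₂ →
      d₁ ^ 2 > σ ^ 2 → d₁ ^ 2 ≥ σ ^ 2 / 2 + γ / 4 →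
      d₂ ^ 2 > σ ^ 2 → d₂ ^ 2 ≥ σ ^ 2 / 2 + γ / 4 →
      E d₂ ≤ E d₁ :=
  fidelity_error_decreases_with_uniqueness_general σ γ hγ w₁ hw₁ E hE
end

section
/- Let μ, θ ∈ ℝ, σ > 0, σ_U > 0 and set w = σ_U²/(σ² + σ_U²). Then ∫ ((1 − w)·(θ + e) + w·μ) dN(0, σ_U²)(e) = (1 − w)·θ + w·μ, and |(1 − w)θ + wμ − μ| ≤ |θ − μ|, with strict inequality whenever θ ≠ μ. Hence the expected output of any user who works with the (unbiased) AI is at least as close, and for θ ≠ μ strictly closer, to the population mean μ than her own preference θ (regression towards the mean). -/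
open MeasureTheory ProbabilityTheory Real NNReal ENNReal

lemma gauss_integrable_id {v : ℝ≥0} (hv : v ≠ 0) :
    Integrable (fun x : ℝ => x) (gaussianReal 0 v) := by
  rw [gaussianReal_of_var_ne_zero 0 hv]
  rw [integrable_withDensity_iff (measurable_gaussianPDF 0 v)
    (Filter.Eventually.of_forall fun x => ENNReal.ofReal_lt_top)]
  have hpos : (0:ℝ) < (1 : ℝ) / (2 * v) := by positivity
  have := (integrable_rpow_mul_exp_neg_mul_sq hpos (s := 1) (by norm_num)).const_mul
      ((Real.sqrt (2 * π * v))⁻¹)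
  apply this.congr
  filter_upwards with x
  rw [gaussianPDF_def, ENNReal.toReal_ofReal (gaussianPDFReal_nonneg 0 v x),
    gaussianPDFReal_def]
  rw [Real.rpow_one]
  ring_nf

lemma gauss_integral_id {v : ℝ≥0} (hv : v ≠ 0) :
    ∫ x, x ∂(gaussianReal 0 v) = 0 := by
  rw [gaussianReal_of_var_ne_zero 0 hv]
  have hmeas : Measurable fun x : ℝ => (gaussianPDFReal 0 v x).toNNReal :=
    (measurable_gaussianPDFReal 0 v).real_toNNReal
  have hwd : gaussianPDF 0 v = fun x => ((gaussianPDFReal 0 v x).toNNReal : ℝ≥0∞) := by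
    funext x; rw [gaussianPDF_def]; rfl
  rw [hwd, integral_withDensity_eq_integral_smul hmeas]
  have hodd : ∀ x : ℝ, ((gaussianPDFReal 0 v (-x)).toNNReal : ℝ) • (-x) =
      -(((gaussianPDFReal 0 v x).toNNReal : ℝ) • x) := by
    intro x
    have : gaussianPDFReal 0 v (-x) = gaussianPDFReal 0 v x := by
      simp [gaussianPDFReal_def]
    rw [this]; simp [smul_eq_mul]
  have h := integral_neg_eq_self (fun x : ℝ => ((gaussianPDFReal 0 v x).toNNReal : ℝ≥0) • x) volume
  simp only [NNReal.smul_def, hodd, integral_neg] at h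
  simp only [NNReal.smul_def] at *
  linarith [h]


/-- Regression towards the mean: the expected output of a user with
preference `θ` working with an unbiased AI (prior `N(μ, σ²)`, signal noise
`σU`, weight `w = σU²/(σ² + σU²)`) is `(1 − w)θ + wμ`, which is at least as
close to the population mean `μ` as `θ` is, strictly so when `θ ≠ μ`. -/
theorem regression_towards_the_mean (μ θ σ σU : ℝ) (hσ : 0 < σ) (hU : 0 < σU) :
    (∫ e, ((1 - σU ^ 2 / (σ ^ 2 + σU ^ 2)) * (θ + e)
        + σU ^ 2 / (σ ^ 2 + σU ^ 2) * μ) ∂(gaussianReal 0 (Real.toNNReal (σU ^ 2)))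
      = (1 - σU ^ 2 / (σ ^ 2 + σU ^ 2)) * θ + σU ^ 2 / (σ ^ 2 + σU ^ 2) * μ) ∧
    |(1 - σU ^ 2 / (σ ^ 2 + σU ^ 2)) * θ + σU ^ 2 / (σ ^ 2 + σU ^ 2) * μ - μ| ≤ |θ - μ| ∧
    (θ ≠ μ →
      |(1 - σU ^ 2 / (σ ^ 2 + σU ^ 2)) * θ + σU ^ 2 / (σ ^ 2 + σU ^ 2) * μ - μ| < |θ - μ|) := by
  set w : ℝ := σU ^ 2 / (σ ^ 2 + σU ^ 2) with hw
  have hden : (0:ℝ) < σ ^ 2 + σU ^ 2 := by positivity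
  have hw0 : 0 < w := by positivity
  have hw1 : w < 1 := by
    rw [hw, div_lt_one hden]; nlinarith
  have hv : (Real.toNNReal (σU ^ 2)) ≠ 0 := by
    simp [Real.toNNReal_eq_zero, not_le]; positivity
  have habs : |(1 - w) * θ + w * μ - μ| = (1 - w) * |θ - μ| := by
    have : (1 - w) * θ + w * μ - μ = (1 - w) * (θ - μ) := by ring
    rw [this, abs_mul, abs_of_pos (by linarith : (0:ℝ) < 1 - w)]
  refine ⟨?_, ?_, ?_⟩
  · have hint : ∀ e : ℝ, (1 - w) * (θ + e) + w * μ
        = (1 - w) * e + ((1 - w) * θ + w * μ) := by intro e; ring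
    simp_rw [hint]
    rw [integral_add ((gauss_integrable_id hv).const_mul _) (integrable_const _),
      MeasureTheory.integral_const_mul, gauss_integral_id hv, integral_const]
    simp
  · rw [habs]
    nlinarith [abs_nonneg (θ - μ)]
  · intro hne
    rw [habs]
    have : 0 < |θ - μ| := abs_pos.mpr (sub_ne_zero.mpr hne)
    nlinarith
end

section
/- Let μ, μ_A ∈ ℝ with μ_A ≥ μ, and σ > 0. Let w : ℝ → [0, ∞) be measurable with w(2μ_A − θ) = w(θ) for all θ ∈ ℝ (symmetric about μ_A), and suppose θ ↦ w(θ)·(μ_A − θ) is integrable with respect to the Gaussian measure N(μ, σ²). Then ∫ w(θ)·(μ_A − θ) dN(μ, σ²)(θ) ≥ 0. -/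
open MeasureTheory ProbabilityTheory

/-- If `w : ℝ → [0, ∞)` is measurable and symmetric about `μA` (i.e.
`w(2μA − θ) = w(θ)`), `μ ≤ μA`, and `θ ↦ w(θ)(μA − θ)` is integrable with
respect to the Gaussian measure `N(μ, σ²)`, then
`∫ w(θ)(μA − θ) dN(μ, σ²)(θ) ≥ 0`. -/
theorem symmetric_weight_integral_nonneg (μ μA σ : ℝ) (hσ : 0 < σ) (hle : μ ≤ μA)
    (w : ℝ → ℝ) (hmeas : Measurable w) (hnn : ∀ θ, 0 ≤ w θ)
    (hsym : ∀ θ, w (2 * μA - θ) = w θ)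
    (hint : Integrable (fun θ => w θ * (μA - θ)) (gaussianReal μ (Real.toNNReal (σ ^ 2)))) :
    0 ≤ ∫ θ, w θ * (μA - θ) ∂(gaussianReal μ (Real.toNNReal (σ ^ 2))) := by
  set v : NNReal := Real.toNNReal (σ ^ 2) with hv
  have hv0 : v ≠ 0 := by
    rw [hv, ne_eq, Real.toNNReal_eq_zero, not_le]
    positivity
  set μ' : ℝ := 2 * μA - μ with hμ'
  set f : ℝ → ℝ := fun θ => w θ * (μA - θ) with hf
  have hfmeas : Measurable f := hmeas.mul (measurable_const.sub measurable_id)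
  -- the reflection map
  have hmap : (gaussianReal μ v).map (fun θ : ℝ => 2 * μA - θ) = gaussianReal μ' v := by
    have h1 : (gaussianReal μ v).map (fun x : ℝ => (-1 : ℝ) * x)
        = gaussianReal (-μ) v := by
      rw [gaussianReal_map_const_mul (-1)]
      congr 1
      · ring
      · ext
        norm_num
    have h2 : (fun θ : ℝ => 2 * μA - θ)
        = (fun x : ℝ => x + 2 * μA) ∘ (fun x : ℝ => (-1 : ℝ) * x) := by
      funext x; simp [Function.comp]; ring
    rw [h2, ← Measure.map_map (measurable_add_const (2 * μA)) (measurable_const_mul (-1)),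
      h1, gaussianReal_map_add_const]
    congr 1
    rw [hμ']; ring
  -- the reflected integral
  have hcompf : (fun θ : ℝ => f (2 * μA - θ)) = fun θ => -f θ := by
    funext θ
    rw [hf]
    simp only
    rw [hsym θ]
    ring
  have hJ : ∫ θ, f θ ∂(gaussianReal μ' v) = - ∫ θ, f θ ∂(gaussianReal μ v) := by
    rw [← hmap, integral_map (by fun_prop) hfmeas.aestronglyMeasurable]
    rw [show (fun θ : ℝ => f (2 * μA - θ)) = fun θ => -f θ from hcompf, integral_neg]
  have hJint : Integrable f (gaussianReal μ' v) := by
    rw [← hmap, integrable_map_measure hfmeas.aestronglyMeasurable (by fun_prop)]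
    rw [show (f ∘ fun θ : ℝ => 2 * μA - θ) = fun θ => -f θ from hcompf]
    exact hint.neg
  -- densities
  have hdens : ∀ m : ℝ, gaussianReal m v
      = volume.withDensity (fun x => ((Real.toNNReal (gaussianPDFReal m v x) : NNReal) : ENNReal)) := by
    intro m
    rw [gaussianReal_of_var_ne_zero m hv0]
    rfl
  have hInt' : ∀ m : ℝ, Integrable f (gaussianReal m v) →
      Integrable (fun x => gaussianPDFReal m v x * f x) volume := by
    intro m h
    rw [hdens m, integrable_withDensity_iff_integrable_smul
      (measurable_gaussianPDFReal m v).real_toNNReal] at h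
    convert h using 2 with x
    case e'_5 => rfl
    rw [NNReal.smul_def, Real.coe_toNNReal _ (gaussianPDFReal_nonneg m v x), smul_eq_mul]
  have hI' : ∀ m : ℝ, ∫ θ, f θ ∂(gaussianReal m v)
      = ∫ x, gaussianPDFReal m v x * f x := by
    intro m
    rw [hdens m, integral_withDensity_eq_integral_smul
      (measurable_gaussianPDFReal m v).real_toNNReal]
    congr 1 with x
    rw [NNReal.smul_def, Real.coe_toNNReal _ (gaussianPDFReal_nonneg m v x), smul_eq_mul]
  -- pointwise sign
  have key : ∀ θ : ℝ, 0 ≤ (gaussianPDFReal μ v θ - gaussianPDFReal μ' v θ) * f θ := by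
    intro θ
    have hc : (0 : ℝ) ≤ (Real.sqrt (2 * Real.pi * v))⁻¹ := by positivity
    have hvpos : (0 : ℝ) < (v : ℝ) := by
      exact_mod_cast pos_iff_ne_zero.mpr hv0
    rcases le_total θ μA with hθ | hθ
    · -- θ ≤ μA : pdf μ ≥ pdf μ'
      have hsq : (θ - μ) ^ 2 ≤ (θ - μ') ^ 2 := by
        have : (θ - μ') ^ 2 - (θ - μ) ^ 2 = 4 * (μA - θ) * (μA - μ) := by
          rw [hμ']; ring
        nlinarith
      have hexp : Real.exp (-(θ - μ') ^ 2 / (2 * v)) ≤ Real.exp (-(θ - μ) ^ 2 / (2 * v)) := by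
        apply Real.exp_le_exp.mpr
        apply div_le_div_of_nonneg_right _ (by positivity)
        linarith
      have hpdf : gaussianPDFReal μ' v θ ≤ gaussianPDFReal μ v θ := by
        unfold gaussianPDFReal
        exact mul_le_mul_of_nonneg_left hexp hc
      have hfnn : 0 ≤ f θ := mul_nonneg (hnn θ) (by linarith)
      exact mul_nonneg (by linarith) hfnn
    · have hsq : (θ - μ') ^ 2 ≤ (θ - μ) ^ 2 := by
        have : (θ - μ) ^ 2 - (θ - μ') ^ 2 = 4 * (θ - μA) * (μA - μ) := by
          rw [hμ']; ring
        nlinarith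
      have hexp : Real.exp (-(θ - μ) ^ 2 / (2 * v)) ≤ Real.exp (-(θ - μ') ^ 2 / (2 * v)) := by
        apply Real.exp_le_exp.mpr
        apply div_le_div_of_nonneg_right _ (by positivity)
        linarith
      have hpdf : gaussianPDFReal μ v θ ≤ gaussianPDFReal μ' v θ := by
        unfold gaussianPDFReal
        exact mul_le_mul_of_nonneg_left hexp hc
      have hfnp : f θ ≤ 0 := mul_nonpos_of_nonneg_of_nonpos (hnn θ) (by linarith)
      nlinarith [hpdf, hfnp]
  -- put together
  have hIint1 : Integrable (fun x => gaussianPDFReal μ v x * f x) volume := hInt' μ hint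
  have hIint2 : Integrable (fun x => gaussianPDFReal μ' v x * f x) volume := hInt' μ' hJint
  have hdiff : 0 ≤ ∫ x, (gaussianPDFReal μ v x * f x - gaussianPDFReal μ' v x * f x) := by
    apply integral_nonneg
    intro x
    simp only [Pi.zero_apply]
    nlinarith [key x]
  rw [integral_sub hIint1 hIint2, ← hI' μ, ← hI' μ', hJ] at hdiff
  linarith
end

section
/- Let μ, μ_A ∈ ℝ and σ > 0. Let w : ℝ → [0, 1] be measurable with w(2μ_A − θ) = w(θ) for all θ ∈ ℝ (symmetric about μ_A). Then | ∫ w(θ)·(μ_A − θ) dN(μ, σ²)(θ) | ≤ |μ_A − μ|, and the integral has the same sign as μ_A − μ. Interpreting w(θ) as the weight that the AI prior mean μ_A receives in the output of a user with preference θ, the societal bias of the output distribution never exceeds the AI bias |μ_A − μ|. -/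
/-!
The integrand `f θ = w θ * (μA - θ)` is odd about `μA`, and reflection about `μA` maps
`N(μ, σ²)` to `N(2μA - μ, σ²)`. Hence `2 ∫ f dN(μ, σ²) = ∫ (p_μ - p_{2μA-μ}) f` as a Lebesgue
integral against the difference of the two densities. The function
`g θ = (μA - μ)(μA - θ)(p_μ θ - p_{2μA-μ} θ)` is nonnegative, since `θ` is closer to `μ` than to
`2μA - μ` exactly when it lies on the same side of `μA` as `μ`; and `∫ g = 2(μA - μ)²` by the
means of the two Gaussians. As `0 ≤ w ≤ 1`, `2(μA - μ) ∫ f dN(μ, σ²) = ∫ w g` lies in `[0, ∫ g]`.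
-/

open MeasureTheory ProbabilityTheory
open scoped NNReal

namespace ProbabilityTheory

variable {v : ℝ≥0}

lemma integrable_gaussianPDFReal_smul_iff {E : Type*} [NormedAddCommGroup E] [NormedSpace ℝ E]
    {m : ℝ} (hv : v ≠ 0) {f : ℝ → E} :
    Integrable (fun x ↦ gaussianPDFReal m v x • f x) ↔ Integrable f (gaussianReal m v) := by
  rw [gaussianReal_of_var_ne_zero _ hv, integrable_withDensity_iff_integrable_smul'
    (measurable_gaussianPDF m v) (ae_of_all _ fun _ ↦ gaussianPDF_lt_top)]
  simp only [toReal_gaussianPDF]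

lemma integral_gaussianReal_sub_integral_gaussianReal {m₁ m₂ : ℝ} (hv : v ≠ 0) {f : ℝ → ℝ}
    (h₁ : Integrable f (gaussianReal m₁ v)) (h₂ : Integrable f (gaussianReal m₂ v)) :
    ∫ x, f x ∂gaussianReal m₁ v - ∫ x, f x ∂gaussianReal m₂ v =
      ∫ x, (gaussianPDFReal m₁ v x - gaussianPDFReal m₂ v x) * f x := by
  rw [integral_gaussianReal_eq_integral_smul hv, integral_gaussianReal_eq_integral_smul hv,
    ← integral_sub ((integrable_gaussianPDFReal_smul_iff hv).2 h₁)
      ((integrable_gaussianPDFReal_smul_iff hv).2 h₂)]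
  simp only [smul_eq_mul, sub_mul]

lemma integrable_gaussianPDFReal_sub_mul {m₁ m₂ : ℝ} (hv : v ≠ 0) {f : ℝ → ℝ}
    (h₁ : Integrable f (gaussianReal m₁ v)) (h₂ : Integrable f (gaussianReal m₂ v)) :
    Integrable fun x ↦ (gaussianPDFReal m₁ v x - gaussianPDFReal m₂ v x) * f x := by
  simpa only [Pi.sub_def, smul_eq_mul, sub_mul] using
    ((integrable_gaussianPDFReal_smul_iff hv).2 h₁).sub
      ((integrable_gaussianPDFReal_smul_iff hv).2 h₂)

lemma integral_comp_const_sub_gaussianReal {E : Type*} [NormedAddCommGroup E] [NormedSpace ℝ E]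
    (y m : ℝ) (f : ℝ → E) :
    ∫ x, f (y - x) ∂gaussianReal m v = ∫ x, f x ∂gaussianReal (y - m) v := by
  rw [← gaussianReal_map_const_sub]
  exact ((Homeomorph.subLeft y).measurableEmbedding.integral_map f).symm

lemma integral_gaussianReal_reflect_of_odd {E : Type*} [NormedAddCommGroup E] [NormedSpace ℝ E]
    {a : ℝ} {f : ℝ → E} (hf : ∀ x, f (2 * a - x) = -f x) (m : ℝ) :
    ∫ x, f x ∂gaussianReal (2 * a - m) v = -∫ x, f x ∂gaussianReal m v := by
  simp only [← integral_comp_const_sub_gaussianReal, hf, integral_neg]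

lemma integral_gaussianReal_eq_zero_of_odd {a : ℝ} {f : ℝ → ℝ} (hf : ∀ x, f (2 * a - x) = -f x) :
    ∫ x, f x ∂gaussianReal a v = 0 := by
  have h := integral_gaussianReal_reflect_of_odd (v := v) hf a
  rw [two_mul, add_sub_cancel_right] at h
  exact self_eq_neg.1 h

lemma integrable_const_sub_gaussianReal (a m : ℝ) :
    Integrable (fun x ↦ a - x) (gaussianReal m v) :=
  (integrable_const a).sub ((memLp_id_gaussianReal 1).integrable le_rfl)

lemma integral_const_sub_gaussianReal (a m : ℝ) : ∫ x, (a - x) ∂gaussianReal m v = a - m := by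
  rw [integral_sub (integrable_const a) (g := fun x ↦ x)
      ((memLp_id_gaussianReal 1).integrable le_rfl),
    integral_const, integral_id_gaussianReal]
  simp

lemma gaussianPDFReal_le_gaussianPDFReal {m₁ m₂ x : ℝ} (h : (x - m₁) ^ 2 ≤ (x - m₂) ^ 2) :
    gaussianPDFReal m₂ v x ≤ gaussianPDFReal m₁ v x := by
  simp only [gaussianPDFReal]
  gcongr

lemma mul_gaussianPDFReal_sub_gaussianPDFReal_reflect_nonneg (a m x : ℝ) :
    0 ≤ (a - m) * ((gaussianPDFReal m v x - gaussianPDFReal (2 * a - m) v x) * (a - x)) := by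
  rw [← mul_comm (a - x), ← mul_assoc]
  have h : (x - (2 * a - m)) ^ 2 - (x - m) ^ 2 = 4 * ((a - m) * (a - x)) := by ring
  rcases le_total 0 ((a - m) * (a - x)) with hpos | hneg
  · exact mul_nonneg hpos (sub_nonneg.2 (gaussianPDFReal_le_gaussianPDFReal (by linarith)))
  · exact mul_nonneg_of_nonpos_of_nonpos hneg
      (sub_nonpos.2 (gaussianPDFReal_le_gaussianPDFReal (by linarith)))

lemma two_mul_integral_gaussianReal_of_odd {a m : ℝ} (hv : v ≠ 0) {f : ℝ → ℝ}
    (hf : ∀ x, f (2 * a - x) = -f x) (h₁ : Integrable f (gaussianReal m v))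
    (h₂ : Integrable f (gaussianReal (2 * a - m) v)) :
    2 * ∫ x, f x ∂gaussianReal m v =
      ∫ x, (gaussianPDFReal m v x - gaussianPDFReal (2 * a - m) v x) * f x := by
  rw [← integral_gaussianReal_sub_integral_gaussianReal hv h₁ h₂,
    integral_gaussianReal_reflect_of_odd hf, sub_neg_eq_add, two_mul]

lemma integral_gaussianPDFReal_sub_reflect_mul_const_sub (hv : v ≠ 0) (a m : ℝ) :
    ∫ x, (gaussianPDFReal m v x - gaussianPDFReal (2 * a - m) v x) * (a - x) = 2 * (a - m) := by
  rw [← integral_gaussianReal_sub_integral_gaussianReal hv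
    (integrable_const_sub_gaussianReal a m) (integrable_const_sub_gaussianReal a _),
    integral_const_sub_gaussianReal, integral_const_sub_gaussianReal]
  ring

lemma mul_integral_mul_const_sub_gaussianReal_mem_Icc (hv : v ≠ 0) {a m : ℝ} {w : ℝ → ℝ}
    (hw : Measurable w) (hmem : ∀ x, w x ∈ Set.Icc (0 : ℝ) 1) (hsym : ∀ x, w (2 * a - x) = w x) :
    (a - m) * ∫ x, w x * (a - x) ∂gaussianReal m v ∈ Set.Icc 0 ((a - m) ^ 2) := by
  set gap : ℝ → ℝ :=
    fun x ↦ (a - m) * ((gaussianPDFReal m v x - gaussianPDFReal (2 * a - m) v x) * (a - x))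
  have hf (m' : ℝ) : Integrable (fun x ↦ w x * (a - x)) (gaussianReal m' v) :=
    (integrable_const_sub_gaussianReal a m').bdd_mul hw.aestronglyMeasurable
      (ae_of_all _ fun x ↦ (Real.norm_of_nonneg (hmem x).1).trans_le (hmem x).2)
  have hodd (x : ℝ) : w (2 * a - x) * (a - (2 * a - x)) = -(w x * (a - x)) := by
    rw [hsym]; ring
  have hbias : 2 * ((a - m) * ∫ x, w x * (a - x) ∂gaussianReal m v) = ∫ x, w x * gap x := by
    rw [mul_left_comm, two_mul_integral_gaussianReal_of_odd hv hodd (hf m) (hf _),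
      ← integral_const_mul]
    congr 1 with x
    ring
  have hai : 2 * (a - m) ^ 2 = ∫ x, gap x := by
    rw [integral_const_mul, integral_gaussianPDFReal_sub_reflect_mul_const_sub hv]
    ring
  have hgap (x : ℝ) : 0 ≤ gap x := mul_gaussianPDFReal_sub_gaussianPDFReal_reflect_nonneg a m x
  have hgap_int : Integrable gap :=
    (integrable_gaussianPDFReal_sub_mul hv (integrable_const_sub_gaussianReal a m)
      (integrable_const_sub_gaussianReal a _)).const_mul (a - m)
  have hw_gap (x : ℝ) : 0 ≤ w x * gap x := mul_nonneg (hmem x).1 (hgap x)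
  constructor
  · have : 0 ≤ ∫ x, w x * gap x := integral_nonneg hw_gap
    linarith
  · have : ∫ x, w x * gap x ≤ ∫ x, gap x := integral_mono_of_nonneg (ae_of_all _ hw_gap) hgap_int
      (ae_of_all _ fun x ↦ mul_le_of_le_one_left (hgap x) (hmem x).2)
    linarith

end ProbabilityTheory

/-- Societal bias never exceeds AI bias: if `w : ℝ → [0, 1]` is measurable and
symmetric about the AI prior mean `μA` (i.e. `w(2μA − θ) = w(θ)`), then the
societal bias `∫ w(θ)(μA − θ) dN(μ, σ²)(θ)` is bounded in absolute value by
the AI bias `|μA − μ|` and has the same sign as `μA − μ`. -/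
theorem societal_bias_le_ai_bias (μ μA σ : ℝ) (hσ : 0 < σ)
    (w : ℝ → ℝ) (hmeas : Measurable w)
    (hmem : ∀ θ, w θ ∈ Set.Icc (0 : ℝ) 1)
    (hsym : ∀ θ, w (2 * μA - θ) = w θ) :
    |∫ θ, w θ * (μA - θ) ∂(gaussianReal μ (Real.toNNReal (σ ^ 2)))| ≤ |μA - μ| ∧
    0 ≤ (μA - μ) * ∫ θ, w θ * (μA - θ) ∂(gaussianReal μ (Real.toNNReal (σ ^ 2))) := by
  have hv : Real.toNNReal (σ ^ 2) ≠ 0 := by simp [hσ.ne']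
  obtain ⟨hnonneg, hle⟩ :=
    mul_integral_mul_const_sub_gaussianReal_mem_Icc (m := μ) hv hmeas hmem hsym
  refine ⟨?_, hnonneg⟩
  rcases eq_or_ne μA μ with rfl | hne
  · rw [integral_gaussianReal_eq_zero_of_odd fun θ ↦ by rw [hsym]; ring]
    simp
  · have hc : 0 < |μA - μ| := abs_pos.2 (sub_ne_zero.2 hne)
    refine le_of_mul_le_mul_left ?_ hc
    rw [← abs_mul, abs_of_nonneg hnonneg, abs_mul_abs_self, ← sq]
    exact hle
end

section
/- Let a ≥ 0, b ≥ 0 and γ₁ > γ₂ > 0. If w₁ ∈ (0, 1] is a global minimizer over (0, 1] of w ↦ w(1 − w)·a + w²·b − (γ₁/2)·ln w, and w₂ ∈ (0, 1] is a global minimizer over (0, 1] of w ↦ w(1 − w)·a + w²·b − (γ₂/2)·ln w, then w₁ ≥ w₂. That is, the optimal weight placed on the AI prior mean is nondecreasing in the interaction-cost parameter γ; consequently, the societal bias inherited from a biased AI increases with the cost of human–AI interactions. -/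
/-! Adding the two optimality inequalities, each minimizer tested against the other, cancels the
cost-independent part of the objective and leaves `(γ₁ - γ₂) (log w₂ - log w₁) ≤ 0`; since `log`
is strictly increasing on `(0, 1]`, this gives `w₂ ≤ w₁`. -/

theorem le_of_isMinOn_sub_mul_of_lt {α : Type*} {s : Set α} {f g : α → ℝ} {γ₁ γ₂ : ℝ}
    {x₁ x₂ : α} (hγ : γ₂ < γ₁) (hx₁ : x₁ ∈ s) (hx₂ : x₂ ∈ s)
    (h₁ : IsMinOn (fun x => f x - γ₁ * g x) s x₁)
    (h₂ : IsMinOn (fun x => f x - γ₂ * g x) s x₂) :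
    g x₂ ≤ g x₁ := by
  have hle₁ : f x₁ - γ₁ * g x₁ ≤ f x₂ - γ₁ * g x₂ := isMinOn_iff.mp h₁ x₂ hx₂
  have hle₂ : f x₂ - γ₂ * g x₂ ≤ f x₁ - γ₂ * g x₁ := isMinOn_iff.mp h₂ x₁ hx₁
  have hsum : (γ₁ - γ₂) * (g x₂ - g x₁) ≤ 0 := by linarith
  exact sub_nonpos.mp (nonpos_of_mul_nonpos_right hsum (sub_pos.mpr hγ))

theorem optimal_weight_monotone_in_cost_general (a b γ₁ γ₂ w₁ w₂ : ℝ)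
    (hγ : γ₁ > γ₂)
    (hw₁ : w₁ ∈ Set.Ioc (0 : ℝ) 1) (hw₂ : w₂ ∈ Set.Ioc (0 : ℝ) 1)
    (hmin₁ : ∀ w ∈ Set.Ioc (0 : ℝ) 1,
      w₁ * (1 - w₁) * a + w₁ ^ 2 * b - γ₁ / 2 * Real.log w₁
        ≤ w * (1 - w) * a + w ^ 2 * b - γ₁ / 2 * Real.log w)
    (hmin₂ : ∀ w ∈ Set.Ioc (0 : ℝ) 1,
      w₂ * (1 - w₂) * a + w₂ ^ 2 * b - γ₂ / 2 * Real.log w₂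
        ≤ w * (1 - w) * a + w ^ 2 * b - γ₂ / 2 * Real.log w) :
    w₂ ≤ w₁ := by
  have hlog : Real.log w₂ ≤ Real.log w₁ :=
    le_of_isMinOn_sub_mul_of_lt (f := fun w => w * (1 - w) * a + w ^ 2 * b)
      (by linarith : γ₂ / 2 < γ₁ / 2) hw₁ hw₂ (isMinOn_iff.mpr hmin₁) (isMinOn_iff.mpr hmin₂)
  exact (Real.log_le_log_iff hw₂.1 hw₁.1).mp hlog

/-- The optimal weight on the AI prior mean is nondecreasing in the
interaction-cost parameter: if `γ₁ > γ₂ > 0` and `wᵢ ∈ (0, 1]` globally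
minimizes `w(1 − w)a + w²b − (γᵢ/2)·ln w` over `(0, 1]`, then `w₁ ≥ w₂`. -/
theorem optimal_weight_monotone_in_cost (a b γ₁ γ₂ w₁ w₂ : ℝ)
    (ha : 0 ≤ a) (hb : 0 ≤ b) (hγ : γ₁ > γ₂) (hγ₂ : 0 < γ₂)
    (hw₁ : w₁ ∈ Set.Ioc (0 : ℝ) 1) (hw₂ : w₂ ∈ Set.Ioc (0 : ℝ) 1)
    (hmin₁ : ∀ w ∈ Set.Ioc (0 : ℝ) 1,
      w₁ * (1 - w₁) * a + w₁ ^ 2 * b - γ₁ / 2 * Real.log w₁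
        ≤ w * (1 - w) * a + w ^ 2 * b - γ₁ / 2 * Real.log w)
    (hmin₂ : ∀ w ∈ Set.Ioc (0 : ℝ) 1,
      w₂ * (1 - w₂) * a + w₂ ^ 2 * b - γ₂ / 2 * Real.log w₂
        ≤ w * (1 - w) * a + w ^ 2 * b - γ₂ / 2 * Real.log w) :
    w₂ ≤ w₁ :=
  optimal_weight_monotone_in_cost_general a b γ₁ γ₂ w₁ w₂ hγ hw₁ hw₂ hmin₁ hmin₂
end

section
/- Let π be a probability measure on ℝ that is symmetric about 0 (the pushforward of π under θ ↦ −θ equals π) with finite variance v² = ∫ θ² dπ(θ). Let σ > 0 and s ∈ ℝ, and define the posterior mean m(s) = ( ∫ θ·exp(−(s − θ)²/(2σ²)) dπ(θ) ) / ( ∫ exp(−(s − θ)²/(2σ²)) dπ(θ) ). Then |m(s)| ≤ max{v, 2|s|} and |m(s)| ≤ v·exp(s²/(4σ²)). That is, the output of a Bayesian AI whose prior has small variance stays uniformly close to 0 no matter how informative a signal the user sends, except for very large signal realizations. -/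
/-!
Write `w` for the Gaussian likelihood of the signal and `K` for either bound. By the weighted
Cauchy–Schwarz inequality it suffices that `∫ θ² w ≤ K² ∫ w`, and since the prior is symmetric
this follows from a pointwise inequality `(θ² - K²) (w θ + w (-θ)) ≤ κ (θ² - v²)`, with `κ` a
Lagrange multiplier for the variance constraint. The symmetrized likelihood is a multiple of
`exp (-θ² / (2σ²)) cosh (s θ / σ²)`. For `K = max v (2|s|)` it is larger inside `|θ| < K` than at
`K` and smaller outside. For `K = v exp (s² / (4σ²))` one only needs that it first increases and
then decreases in `|θ|`, and never exceeds `exp (s² / (2σ²))` times its value at `0`.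
-/

open MeasureTheory Real Set

theorem antitoneOn_tanh_div_self : AntitoneOn (fun y => tanh y / y) (Ioi 0) := by
  have hfun : (fun y => tanh y / y) = fun y => sinh y / (y * cosh y) := by
    funext y; rw [tanh_eq_sinh_div_cosh, div_div, mul_comm]
  have hderiv : ∀ y ≠ 0, HasDerivAt (fun y => sinh y / (y * cosh y))
      ((y - sinh y * cosh y) / (y * cosh y) ^ 2) y := by
    intro y hy
    refine ((hasDerivAt_sinh y).div ((hasDerivAt_id' y).mul (hasDerivAt_cosh y))
      (mul_ne_zero hy (cosh_pos y).ne')).congr_deriv ?_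
    simp only [Pi.mul_apply]
    congr 1
    linear_combination y * cosh_sq y
  rw [hfun]
  apply antitoneOn_of_deriv_nonpos (convex_Ioi 0)
  · exact fun y hy => (hderiv y (ne_of_gt hy)).continuousAt.continuousWithinAt
  · rw [interior_Ioi]
    exact fun y hy => (hderiv y (ne_of_gt hy)).differentiableAt.differentiableWithinAt
  · rw [interior_Ioi]
    intro y hy
    rw [(hderiv y (ne_of_gt hy)).deriv]
    have : 2 * y ≤ sinh (2 * y) := self_le_sinh_iff.2 (by linarith [mem_Ioi.1 hy])
    rw [sinh_two_mul] at this
    exact div_nonpos_of_nonpos_of_nonneg (by linarith) (sq_nonneg _)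

theorem QuasiconcaveOn.min_le_of_mem_Icc {s : Set ℝ} {f : ℝ → ℝ} (hf : QuasiconcaveOn ℝ s f)
    {a b x : ℝ} (ha : a ∈ s) (hb : b ∈ s) (hx : x ∈ Icc a b) : min (f a) (f b) ≤ f x :=
  ((hf _).ordConnected.out ⟨ha, min_le_left _ _⟩ ⟨hb, min_le_right _ _⟩ hx).2

theorem quasiconcaveOn_of_deriv_neg_imp_nonpos {s : Set ℝ} {f : ℝ → ℝ} (hs : Convex ℝ s)
    (hf : ContinuousOn f s) (hf' : DifferentiableOn ℝ f (interior s))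
    (hderiv : ∀ x ∈ interior s, ∀ y ∈ interior s, x ≤ y → deriv f x < 0 → deriv f y ≤ 0) :
    QuasiconcaveOn ℝ s f := by
  have hIoo : ∀ {x y : ℝ}, x ∈ s → y ∈ s → Ioo x y ⊆ interior s := fun {x y} hx hy =>
    (interior_Icc (a := x) (b := y)).symm ▸ interior_mono (hs.ordConnected.out hx hy)
  refine fun r => convex_iff_ordConnected.2 ⟨fun x hx y hy u hu => ?_⟩
  have hus : u ∈ s := hs.ordConnected.out hx.1 hy.1 hu
  refine ⟨hus, ?_⟩
  by_cases hinc : ∀ t ∈ Ioo x u, 0 ≤ deriv f t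
  · have hmono : MonotoneOn f (Icc x u) := by
      refine monotoneOn_of_deriv_nonneg (convex_Icc x u)
        (hf.mono (hs.ordConnected.out hx.1 hus)) ?_ ?_
      · rw [interior_Icc]; exact hf'.mono (hIoo hx.1 hus)
      · rwa [interior_Icc]
    exact hx.2.trans (hmono ⟨le_rfl, hu.1⟩ ⟨hu.1, le_rfl⟩ hu.1)
  · push Not at hinc
    obtain ⟨t, ht, hneg⟩ := hinc
    have hanti : AntitoneOn f (Icc u y) := by
      refine antitoneOn_of_deriv_nonpos (convex_Icc u y)
        (hf.mono (hs.ordConnected.out hus hy.1)) ?_ ?_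
      · rw [interior_Icc]; exact hf'.mono (hIoo hus hy.1)
      · rw [interior_Icc]
        exact fun t' ht' => hderiv t (hIoo hx.1 hus ht) t' (hIoo hus hy.1 ht')
          (ht.2.le.trans ht'.1.le) hneg
    exact hy.2.trans (hanti ⟨le_rfl, hu.2⟩ ⟨hu.2, le_rfl⟩ hu.2)

theorem quasiconcaveOn_Ici_exp_neg_mul_sq_mul_cosh (a b : ℝ) :
    QuasiconcaveOn ℝ (Ici 0) (fun t => exp (-a * t ^ 2) * cosh (b * t)) := by
  wlog hb : 0 ≤ b generalizing b
  · simpa only [neg_mul, cosh_neg] using this (-b) (by linarith)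
  have hderiv : ∀ t, HasDerivAt (fun t => exp (-a * t ^ 2) * cosh (b * t))
      (exp (-a * t ^ 2) * (b * sinh (b * t) - 2 * a * t * cosh (b * t))) t := fun t =>
    (((hasDerivAt_pow 2 t).const_mul (-a)).exp.mul
      ((hasDerivAt_id' t).const_mul b).cosh).congr_deriv (by norm_num; ring)
  -- `tanh y / y` is antitone, so the derivative changes sign at most once, from `+` to `-`
  have hfactor : ∀ t > 0, deriv (fun t => exp (-a * t ^ 2) * cosh (b * t)) t =
      exp (-a * t ^ 2) * (t * cosh (b * t)) * (b ^ 2 * (tanh (b * t) / (b * t)) - 2 * a) := by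
    intro t ht
    rw [(hderiv t).deriv, tanh_eq_sinh_div_cosh]
    rcases hb.eq_or_lt with rfl | hb
    · simp only [zero_mul, sinh_zero, cosh_zero]; ring
    have := (cosh_pos (b * t)).ne'
    field_simp
  refine quasiconcaveOn_of_deriv_neg_imp_nonpos (convex_Ici 0)
    (fun t _ => (hderiv t).continuousAt.continuousWithinAt)
    (fun t _ => (hderiv t).differentiableAt.differentiableWithinAt) ?_
  rw [interior_Ici]
  intro x hx y hy hxy hneg
  rw [hfactor x hx] at hneg
  rw [hfactor y hy]
  have hanti : b ^ 2 * (tanh (b * y) / (b * y)) ≤ b ^ 2 * (tanh (b * x) / (b * x)) := by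
    rcases hb.eq_or_lt with rfl | hb
    · simp
    exact mul_le_mul_of_nonneg_left (antitoneOn_tanh_div_self (mul_pos hb hx) (mul_pos hb hy)
      (by gcongr)) (sq_nonneg b)
  have hx' := neg_of_mul_neg_right hneg (by positivity [mem_Ioi.1 hx])
  exact mul_nonpos_of_nonneg_of_nonpos (by positivity [mem_Ioi.1 hy]) (by linarith)

theorem sq_sub_mul_sq_mul_le_of_quasiconcaveOn {ρ : ℝ → ℝ} {E t u : ℝ}
    (hρ : QuasiconcaveOn ℝ (Ici 0) ρ) (hρ_nonneg : ∀ x, 0 ≤ ρ x) (hE : 1 ≤ E)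
    (hρE : ∀ x, ρ x ≤ E * ρ 0) (ht : 0 ≤ t) (hu : 0 ≤ u) :
    (t ^ 2 - E * u ^ 2) * ρ t ≤ E * min (ρ 0) (ρ u) * (t ^ 2 - u ^ 2) := by
  have hr : 0 ≤ min (ρ 0) (ρ u) := le_min (hρ_nonneg 0) (hρ_nonneg u)
  have hEu : u ^ 2 ≤ E * u ^ 2 := le_mul_of_one_le_left (sq_nonneg u) hE
  rcases le_or_gt t u with htu | hut
  · have hmin : min (ρ 0) (ρ u) ≤ ρ t := hρ.min_le_of_mem_Icc self_mem_Ici hu ⟨ht, htu⟩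
    have htu2 : t ^ 2 ≤ u ^ 2 := pow_le_pow_left₀ ht htu 2
    nlinarith [mul_nonneg (sub_nonneg.2 (htu2.trans hEu)) (sub_nonneg.2 hmin),
      mul_nonneg (mul_nonneg (sq_nonneg t) hr) (sub_nonneg.2 hE)]
  have hut2 : u ^ 2 ≤ t ^ 2 := pow_le_pow_left₀ hu hut.le 2
  rcases le_or_gt (t ^ 2) (E * u ^ 2) with hsmall | hbig
  · nlinarith [mul_nonneg (sub_nonneg.2 hsmall) (hρ_nonneg t),
      mul_nonneg (mul_nonneg (zero_le_one.trans hE) hr) (sub_nonneg.2 hut2)]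
  rcases le_or_gt (ρ 0) (ρ u) with h0u | hu0
  · rw [min_eq_left h0u]
    calc (t ^ 2 - E * u ^ 2) * ρ t ≤ (t ^ 2 - E * u ^ 2) * (E * ρ 0) :=
          mul_le_mul_of_nonneg_left (hρE t) (by linarith)
      _ ≤ (t ^ 2 - u ^ 2) * (E * ρ 0) :=
          mul_le_mul_of_nonneg_right (by linarith) (mul_nonneg (zero_le_one.trans hE) (hρ_nonneg 0))
      _ = E * ρ 0 * (t ^ 2 - u ^ 2) := by ring
  · -- past a value below `ρ 0`, a quasiconcave function stays below it
    have hρt : ρ t ≤ ρ u := by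
      have := hρ.min_le_of_mem_Icc self_mem_Ici (ht : t ∈ Ici 0) ⟨hu, hut.le⟩
      exact (min_le_iff.1 this).resolve_left hu0.not_ge
    rw [min_eq_right hu0.le]
    calc (t ^ 2 - E * u ^ 2) * ρ t ≤ (t ^ 2 - u ^ 2) * ρ u :=
          mul_le_mul (by linarith) hρt (hρ_nonneg t) (by linarith)
      _ ≤ E * ((t ^ 2 - u ^ 2) * ρ u) :=
          le_mul_of_one_le_left (mul_nonneg (by linarith) (hρ_nonneg u)) hE
      _ = E * ρ u * (t ^ 2 - u ^ 2) := by ring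

theorem sq_integral_mul_le_integral_sq_mul_mul_integral {α : Type*} [MeasurableSpace α]
    {μ : Measure α} {f w : α → ℝ} (hw : 0 ≤ᵐ[μ] w) (hw_int : Integrable w μ)
    (hfw : Integrable (fun a => f a * w a) μ) (hf2w : Integrable (fun a => f a ^ 2 * w a) μ) :
    (∫ a, f a * w a ∂μ) ^ 2 ≤ (∫ a, f a ^ 2 * w a ∂μ) * ∫ a, w a ∂μ := by
  have hquad : ∀ x : ℝ, 0 ≤ (∫ a, f a ^ 2 * w a ∂μ) * (x * x) + 2 * (∫ a, f a * w a ∂μ) * x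
      + ∫ a, w a ∂μ := by
    intro x
    have hexpand : (fun a => (x * f a + 1) ^ 2 * w a) =
        fun a => (x * x) * (f a ^ 2 * w a) + (2 * x) * (f a * w a) + w a := by
      funext a; ring
    have := integral_nonneg_of_ae (μ := μ) (f := fun a => (x * f a + 1) ^ 2 * w a)
      (hw.mono fun a ha => mul_nonneg (sq_nonneg _) ha)
    have h1 : Integrable (fun a => x * x * (f a ^ 2 * w a)) μ := hf2w.const_mul _
    have h2 : Integrable (fun a => 2 * x * (f a * w a)) μ := hfw.const_mul _
    rw [hexpand, integral_add (h1.fun_add h2) hw_int, integral_add h1 h2, integral_const_mul,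
      integral_const_mul] at this
    linarith
  have := discrim_le_zero hquad
  rw [discrim] at this
  linarith

theorem integral_sq_mul_le_of_forall_le {P : Measure ℝ} [IsProbabilityMeasure P]
    [P.IsNegInvariant] {v c κ : ℝ} {w : ℝ → ℝ} (hint : Integrable (fun θ => θ ^ 2) P)
    (hvar : ∫ θ, θ ^ 2 ∂P = v ^ 2) (hw : Integrable w P)
    (hw2 : Integrable (fun θ => θ ^ 2 * w θ) P)
    (h : ∀ θ, (θ ^ 2 - c) * (w θ + w (-θ)) ≤ κ * (θ ^ 2 - v ^ 2)) :
    ∫ θ, θ ^ 2 * w θ ∂P ≤ c * ∫ θ, w θ ∂P := by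
  set g : ℝ → ℝ := fun θ => θ ^ 2 * w θ - c * w θ with hg_def
  have hg : Integrable g P := hw2.sub (hw.const_mul c)
  have hsymm : 2 * ∫ θ, g θ ∂P ≤ 0 := calc
    2 * ∫ θ, g θ ∂P = ∫ θ, (g θ + g (-θ)) ∂P := by
      rw [integral_add hg hg.comp_neg, integral_neg_eq_self]; ring
    _ ≤ ∫ θ, κ * (θ ^ 2 - v ^ 2) ∂P :=
      integral_mono (hg.add hg.comp_neg) ((hint.sub (integrable_const _)).const_mul κ)
        fun θ => by simpa only [hg_def, neg_sq, ← sub_mul, ← mul_add] using h θ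
    _ = 0 := by
      rw [integral_const_mul, integral_sub hint (integrable_const _), hvar]; simp
  rw [hg_def, integral_sub hw2 (hw.const_mul c), integral_const_mul] at hsymm
  linarith

noncomputable def gaussianLikelihood (σ s θ : ℝ) : ℝ := exp (-(s - θ) ^ 2 / (2 * σ ^ 2))

noncomputable def posteriorMean (P : Measure ℝ) (σ s : ℝ) : ℝ :=
  (∫ θ, θ * gaussianLikelihood σ s θ ∂P) / ∫ θ, gaussianLikelihood σ s θ ∂P

namespace gaussianLikelihood

variable {σ s : ℝ}

theorem pos (θ : ℝ) : 0 < gaussianLikelihood σ s θ := exp_pos _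

theorem le_one (θ : ℝ) : gaussianLikelihood σ s θ ≤ 1 :=
  exp_le_one_iff.2 (div_nonpos_of_nonpos_of_nonneg (neg_nonpos.2 (sq_nonneg _)) (by positivity))

theorem continuous : Continuous (gaussianLikelihood σ s) := by
  unfold gaussianLikelihood; fun_prop

theorem neg (θ : ℝ) : gaussianLikelihood σ s (-θ) = gaussianLikelihood σ (-s) θ := by
  unfold gaussianLikelihood; ring_nf

theorem add_neg_eq (θ : ℝ) : gaussianLikelihood σ s θ + gaussianLikelihood σ s (-θ) =
    2 * exp (-s ^ 2 / (2 * σ ^ 2)) *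
      (exp (-(2 * σ ^ 2)⁻¹ * θ ^ 2) * cosh (s / σ ^ 2 * θ)) := by
  have hsplit : ∀ x, -(s - x) ^ 2 / (2 * σ ^ 2) =
      -s ^ 2 / (2 * σ ^ 2) + (-(2 * σ ^ 2)⁻¹ * x ^ 2 + s / σ ^ 2 * x) := fun x => by ring
  rw [gaussianLikelihood, gaussianLikelihood, hsplit, hsplit, neg_sq, mul_neg, cosh_eq]
  simp only [exp_add]
  ring

theorem add_neg_abs (θ : ℝ) : gaussianLikelihood σ s |θ| + gaussianLikelihood σ s (-|θ|) =
    gaussianLikelihood σ s θ + gaussianLikelihood σ s (-θ) := by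
  rcases abs_choice θ with h | h <;> rw [h]
  rw [neg_neg, add_comm]

theorem sq_sub_sq_mul_sub_nonpos {θ T : ℝ} (hθ : 0 ≤ θ) (hT : 2 * |s| ≤ T) :
    (θ ^ 2 - T ^ 2) * (gaussianLikelihood σ s θ - gaussianLikelihood σ s T) ≤ 0 := by
  have hs₁ := le_abs_self s
  have hs₂ := neg_abs_le s
  rcases le_total θ T with h | h
  · refine mul_nonpos_of_nonpos_of_nonneg (by nlinarith) (sub_nonneg.2 (exp_le_exp.2 ?_))
    exact div_le_div_of_nonneg_right (by nlinarith) (by positivity)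
  · refine mul_nonpos_of_nonneg_of_nonpos (by nlinarith) (sub_nonpos.2 (exp_le_exp.2 ?_))
    exact div_le_div_of_nonneg_right (by nlinarith) (by positivity)

theorem sq_sub_sq_mul_add_neg_sub_nonpos (θ : ℝ) {T : ℝ} (hT : 2 * |s| ≤ T) :
    (θ ^ 2 - T ^ 2) * ((gaussianLikelihood σ s θ + gaussianLikelihood σ s (-θ)) -
      (gaussianLikelihood σ s T + gaussianLikelihood σ s (-T))) ≤ 0 := by
  rw [← add_neg_abs θ, ← sq_abs θ, neg, neg]
  have h₁ := sq_sub_sq_mul_sub_nonpos (σ := σ) (abs_nonneg θ) hT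
  have h₂ := sq_sub_sq_mul_sub_nonpos (σ := σ) (abs_nonneg θ) ((abs_neg s).symm ▸ hT)
  linarith

theorem sq_sub_sq_mul_add_neg_le (θ : ℝ) {v T : ℝ} (hv : 0 ≤ v) (hvT : v ≤ T)
    (hT : 2 * |s| ≤ T) :
    (θ ^ 2 - T ^ 2) * (gaussianLikelihood σ s θ + gaussianLikelihood σ s (-θ)) ≤
      (gaussianLikelihood σ s T + gaussianLikelihood σ s (-T)) * (θ ^ 2 - v ^ 2) := by
  have hST : 0 < gaussianLikelihood σ s T + gaussianLikelihood σ s (-T) :=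
    add_pos (pos T) (pos (-T))
  nlinarith [sq_sub_sq_mul_add_neg_sub_nonpos (σ := σ) θ hT,
    mul_le_mul_of_nonneg_left (pow_le_pow_left₀ hv hvT 2) hST.le]

theorem quasiconcaveOn_add_neg :
    QuasiconcaveOn ℝ (Ici 0) fun θ => gaussianLikelihood σ s θ + gaussianLikelihood σ s (-θ) := by
  rw [funext add_neg_eq]
  exact (quasiconcaveOn_Ici_exp_neg_mul_sq_mul_cosh _ _).monotone_comp
    (monotone_mul_left_of_nonneg (by positivity))

theorem sq_sub_mul_sq_mul_add_neg_le (θ : ℝ) {v : ℝ} (hv : 0 ≤ v) :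
    (θ ^ 2 - exp (s ^ 2 / (2 * σ ^ 2)) * v ^ 2) *
        (gaussianLikelihood σ s θ + gaussianLikelihood σ s (-θ)) ≤
      exp (s ^ 2 / (2 * σ ^ 2)) * min (gaussianLikelihood σ s 0 + gaussianLikelihood σ s (-0))
        (gaussianLikelihood σ s v + gaussianLikelihood σ s (-v)) * (θ ^ 2 - v ^ 2) := by
  -- the symmetrized likelihood is at most `2`, which is `exp (s² / (2σ²))` times its value at `0`
  have hmax : ∀ x, gaussianLikelihood σ s x + gaussianLikelihood σ s (-x) ≤
      exp (s ^ 2 / (2 * σ ^ 2)) * (gaussianLikelihood σ s 0 + gaussianLikelihood σ s (-0)) := by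
    intro x
    have hS0 : exp (s ^ 2 / (2 * σ ^ 2)) *
        (gaussianLikelihood σ s 0 + gaussianLikelihood σ s (-0)) = 2 := by
      simp only [gaussianLikelihood, neg_zero, sub_zero]
      rw [neg_div, exp_neg]
      field_simp
      ring
    linarith [le_one (σ := σ) (s := s) x, le_one (σ := σ) (s := s) (-x)]
  have := sq_sub_mul_sq_mul_le_of_quasiconcaveOn quasiconcaveOn_add_neg
    (fun x => (add_pos (pos x) (pos (-x))).le) (one_le_exp (by positivity)) hmax (abs_nonneg θ) hv
  rwa [add_neg_abs, sq_abs] at this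

end gaussianLikelihood

theorem abs_posteriorMean_le_of_forall_le {P : Measure ℝ} [IsProbabilityMeasure P]
    [P.IsNegInvariant] {v σ s K κ : ℝ} (hint : Integrable (fun θ => θ ^ 2) P)
    (hvar : ∫ θ, θ ^ 2 ∂P = v ^ 2) (hK : 0 ≤ K)
    (h : ∀ θ, (θ ^ 2 - K ^ 2) * (gaussianLikelihood σ s θ + gaussianLikelihood σ s (-θ)) ≤
      κ * (θ ^ 2 - v ^ 2)) :
    |posteriorMean P σ s| ≤ K := by
  have hmeas := gaussianLikelihood.continuous (σ := σ) (s := s) |>.aestronglyMeasurable (μ := P)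
  have hbound : ∀ᵐ θ ∂P, ‖gaussianLikelihood σ s θ‖ ≤ 1 := ae_of_all _ fun θ => by
    rw [Real.norm_of_nonneg (gaussianLikelihood.pos θ).le]; exact gaussianLikelihood.le_one θ
  have hid : Integrable (fun θ : ℝ => θ) P :=
    ((memLp_two_iff_integrable_sq aestronglyMeasurable_id).2 hint).integrable one_le_two
  have hw : Integrable (gaussianLikelihood σ s) P := .of_bound hmeas 1 hbound
  have hw1 := hid.mul_bdd hmeas hbound
  have hw2 := hint.mul_bdd hmeas hbound
  have hD : 0 < ∫ θ, gaussianLikelihood σ s θ ∂P := integral_exp_pos hw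
  have hJ := integral_sq_mul_le_of_forall_le hint hvar hw hw2 h
  have hCS := sq_integral_mul_le_integral_sq_mul_mul_integral
    (ae_of_all _ fun θ => (gaussianLikelihood.pos θ).le) hw hw1 hw2
  rw [posteriorMean, abs_div, abs_of_pos hD, div_le_iff₀ hD]
  refine abs_le_of_sq_le_sq ?_ (by positivity)
  calc _ ≤ _ := hCS
    _ ≤ K ^ 2 * (∫ θ, gaussianLikelihood σ s θ ∂P) * ∫ θ, gaussianLikelihood σ s θ ∂P :=
      mul_le_mul_of_nonneg_right hJ hD.le
    _ = _ := by ring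

theorem posterior_mean_bounds_general (P : Measure ℝ) [IsProbabilityMeasure P]
    (hsym : Measure.map (fun θ => -θ) P = P)
    (v : ℝ) (hv0 : 0 ≤ v)
    (hint : Integrable (fun θ => θ ^ 2) P)
    (hvar : ∫ θ, θ ^ 2 ∂P = v ^ 2)
    (σ s : ℝ) :
    |(∫ θ, θ * Real.exp (-(s - θ) ^ 2 / (2 * σ ^ 2)) ∂P) /
        (∫ θ, Real.exp (-(s - θ) ^ 2 / (2 * σ ^ 2)) ∂P)| ≤ max v (2 * |s|) ∧
    |(∫ θ, θ * Real.exp (-(s - θ) ^ 2 / (2 * σ ^ 2)) ∂P) /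
        (∫ θ, Real.exp (-(s - θ) ^ 2 / (2 * σ ^ 2)) ∂P)| ≤ v * Real.exp (s ^ 2 / (4 * σ ^ 2)) := by
  have : P.IsNegInvariant := ⟨hsym⟩
  constructor
  · exact abs_posteriorMean_le_of_forall_le hint hvar (hv0.trans (le_max_left _ _)) fun θ =>
      gaussianLikelihood.sq_sub_sq_mul_add_neg_le θ hv0 (le_max_left _ _) (le_max_right _ _)
  · have hK : (v * exp (s ^ 2 / (4 * σ ^ 2))) ^ 2 = exp (s ^ 2 / (2 * σ ^ 2)) * v ^ 2 := by
      rw [mul_pow, ← exp_nat_mul]; ring_nf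
    have h := fun θ => gaussianLikelihood.sq_sub_mul_sq_mul_add_neg_le (σ := σ) (s := s) θ hv0
    rw [← hK] at h
    exact abs_posteriorMean_le_of_forall_le hint hvar (by positivity) h

/-- Bounds on the posterior mean under a symmetric prior with small variance:
if `P` is a probability measure on `ℝ` symmetric about `0` with variance
`v² = ∫ θ² dP`, and `m(s)` is the posterior mean after a Gaussian signal with
noise standard deviation `σ`, then `|m(s)| ≤ max(v, 2|s|)` and
`|m(s)| ≤ v·exp(s²/(4σ²))`. -/
theorem posterior_mean_bounds (P : Measure ℝ) [IsProbabilityMeasure P]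
    (hsym : Measure.map (fun θ => -θ) P = P)
    (v : ℝ) (hv0 : 0 ≤ v)
    (hint : Integrable (fun θ => θ ^ 2) P)
    (hvar : ∫ θ, θ ^ 2 ∂P = v ^ 2)
    (σ s : ℝ) (hσ : 0 < σ) :
    |(∫ θ, θ * Real.exp (-(s - θ) ^ 2 / (2 * σ ^ 2)) ∂P) /
        (∫ θ, Real.exp (-(s - θ) ^ 2 / (2 * σ ^ 2)) ∂P)| ≤ max v (2 * |s|) ∧
    |(∫ θ, θ * Real.exp (-(s - θ) ^ 2 / (2 * σ ^ 2)) ∂P) /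
        (∫ θ, Real.exp (-(s - θ) ^ 2 / (2 * σ ^ 2)) ∂P)| ≤ v * Real.exp (s ^ 2 / (4 * σ ^ 2)) :=
  posterior_mean_bounds_general P hsym v hv0 hint hvar σ s
end
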